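/- arXiv:2307.02062 — 4 statements merged into one kernel-verified Lean document; each statement's English description precedes it below -/
import Mathlib

section
/- Suppose that det(Z_jᵀR_j) ≠ 0 for j = k−m_k+1, …, k, where X_j = (Δx_{j−m_j}, …, Δx_{j−1}), R_j = (Δr_{j−m_j}, …, Δr_{j−1}) are the original historical sequences (with m_j = m_k − (k−j)), Δ denotes forward difference, and Z_j := X_j for the Type-I method, Z_j := R_j for the Type-II method. Then the modified-sequence procedures defining ζ_k, q_k, Γ_k, r̄_k are well defined, and: (1) X_k = P_kS_k and R_k = Q_kS_k for some unit upper triangular matrix S_k ∈ ℝ^{m_k×m_k}; (2) V_kᵀQ_k is lower triangular; (3) r̄_k ⊥ range(V_k); moreover, the AM update with modified historical sequences produces the same iterates x_{k−m_k+1}, …, x_{k+1} as the original AM update x_{j+1} = x_j + G_j r_j with G_j = β_j I − (X_j + β_j R_j)(Z_jᵀR_j)⁻¹Z_jᵀ. -/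
/-! Whatever the coefficients `ζ`, the recursion for the modified pairs gives `X = P S`, `R = Q S`
and `Z = V S` with one unit upper triangular `S`, and this holds on every leading block. Hence
`Zᵀ R = Sᵀ (Vᵀ Q) S` has the same leading principal minors as `Vᵀ Q`, so the systems defining `ζ`
and `Γ` are nonsingular; solving them enforces the orthogonality relations, which make `Vᵀ Q`
lower triangular, and its nonzero determinant forces a nonzero diagonal. Finally the oblique
projector `(X + β R)(Zᵀ R)⁻¹ Zᵀ = (P + β Q)(Vᵀ Q)⁻¹ Vᵀ` does not see the change of basis `S`,
so the two updates agree. -/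

open scoped InnerProductSpace
open Finset Matrix

noncomputable section

/-- Euclidean space `ℝ^d`. -/
abbrev E (d : ℕ) := EuclideanSpace ℝ (Fin d)

/-- Matrix–vector multiplication on Euclidean space. -/
def mvE {d m : ℕ} (A : Matrix (Fin d) (Fin m) ℝ) (u : E m) : E d :=
  Matrix.toEuclideanLin A u

lemma mul_inv_transpose_mul_mul_right_eq {m n K : Type*} [Fintype m] [Fintype n] [DecidableEq n]
    [Field K] (A B C : Matrix m n K) {S : Matrix n n K} (hS : IsUnit S.det) :
    A * S * ((C * S)ᵀ * (B * S))⁻¹ * (C * S)ᵀ = A * (Cᵀ * B)⁻¹ * Cᵀ := by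
  have hST : IsUnit Sᵀ.det := by rwa [Matrix.det_transpose]
  rw [Matrix.transpose_mul, show Sᵀ * Cᵀ * (B * S) = Sᵀ * (Cᵀ * B) * S by
    simp only [Matrix.mul_assoc], Matrix.mul_inv_rev, Matrix.mul_inv_rev]
  simp only [Matrix.mul_assoc]
  rw [Matrix.mul_nonsing_inv_cancel_left _ _ hS, Matrix.nonsing_inv_mul_cancel_left _ _ hST]

namespace ModifiedAM

variable {d : ℕ}

lemma ofLp_mvE {m : ℕ} (A : Matrix (Fin d) (Fin m) ℝ) (u : E m) : ⇑(mvE A u) = A *ᵥ ⇑u := rfl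

def colMat (u : ℕ → E d) (n : ℕ) : Matrix (Fin d) (Fin n) ℝ :=
  Matrix.of fun c i => u i c

lemma colMat_congr {u u' : ℕ → E d} {n : ℕ} (h : ∀ i < n, u i = u' i) :
    colMat u n = colMat u' n := by
  ext c i
  simp [colMat, h i i.2]

lemma transpose_colMat_mul_colMat (u w : ℕ → E d) (n : ℕ) :
    (colMat u n)ᵀ * colMat w n = Matrix.of fun i j : Fin n => ⟪u i, w j⟫_ℝ := by
  ext i j
  simp [colMat, Matrix.mul_apply, EuclideanSpace.inner_eq_star_dotProduct, dotProduct, mul_comm]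

lemma transpose_colMat_mulVec (u : ℕ → E d) (n : ℕ) (b : E d) :
    (colMat u n)ᵀ *ᵥ b = fun i : Fin n => ⟪u i, b⟫_ℝ := by
  ext i
  simp [colMat, Matrix.mulVec, EuclideanSpace.inner_eq_star_dotProduct, dotProduct, mul_comm]

lemma colMat_mulVec (u : ℕ → E d) (n : ℕ) (c : ℕ → ℝ) :
    colMat u n *ᵥ (fun i : Fin n => c i) = ⇑(∑ i ∈ range n, c i • u i) := by
  ext k
  simp [colMat, Matrix.mulVec, dotProduct, WithLp.ofLp_sum, mul_comm,
    ← Fin.sum_univ_eq_sum_range]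

def unitUpper (ζ : ℕ → ℕ → ℝ) (n : ℕ) : Matrix (Fin n) (Fin n) ℝ :=
  Matrix.of fun l i => if l = i then 1 else if (l : ℕ) < i then ζ i l else 0

lemma unitUpper_apply_self (ζ : ℕ → ℕ → ℝ) {n : ℕ} (i : Fin n) :
    unitUpper ζ n i i = 1 := by
  simp [unitUpper]

lemma isUpperTriangular_unitUpper (ζ : ℕ → ℕ → ℝ) (n : ℕ) :
    (unitUpper ζ n).IsUpperTriangular := fun l i (h : i < l) => by
  simp [unitUpper, h.ne', h.not_gt]

lemma det_unitUpper (ζ : ℕ → ℕ → ℝ) (n : ℕ) : (unitUpper ζ n).det = 1 := by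
  simp [Matrix.det_of_isUpperTriangular (isUpperTriangular_unitUpper ζ n), unitUpper_apply_self]

lemma colMat_eq_mul_unitUpper {u w : ℕ → E d} {ζ : ℕ → ℕ → ℝ}
    (hw : ∀ a, w a = u a - ∑ i ∈ range a, ζ a i • w i) (n : ℕ) :
    colMat u n = colMat w n * unitUpper ζ n := by
  ext c j
  have hu : u j = w j + ∑ i ∈ range j, ζ j i • w i := by rw [hw j]; abel
  have hsplit : ∀ l : Fin n, unitUpper ζ n l j =
      (if l = j then 1 else 0) + if (l : ℕ) < j then ζ j l else 0 := by
    intro l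
    by_cases h : l = j <;> simp [unitUpper, h]
  simp only [Matrix.mul_apply, colMat, Matrix.of_apply, hsplit, mul_add, Finset.sum_add_distrib,
    mul_ite, mul_one, mul_zero, Finset.sum_ite_eq', Finset.mem_univ, if_true, hu]
  have hrange : (range n).filter (· < (j : ℕ)) = range j := by
    ext l; simp only [mem_filter, mem_range]; omega
  rw [Fin.sum_univ_eq_sum_range (fun l => if l < (j : ℕ) then w l c * ζ j l else 0),
    ← Finset.sum_filter, hrange]
  simp [WithLp.ofLp_sum, mul_comm]

/-- Junk (zero) when `(colMat v n)ᵀ * colMat q n` is singular. -/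
def obliqueCoeffs (v q : ℕ → E d) (n : ℕ) (b : E d) (i : ℕ) : ℝ :=
  if h : i < n then (((colMat v n)ᵀ * colMat q n)⁻¹ *ᵥ ((colMat v n)ᵀ *ᵥ b)) ⟨i, h⟩ else 0

lemma obliqueCoeffs_congr {v v' q q' : ℕ → E d} {n : ℕ} (hv : ∀ i < n, v i = v' i)
    (hq : ∀ i < n, q i = q' i) (b : E d) :
    obliqueCoeffs v q n b = obliqueCoeffs v' q' n b := by
  unfold obliqueCoeffs
  rw [colMat_congr hv, colMat_congr hq]

lemma colMat_mulVec_obliqueCoeffs (w v q : ℕ → E d) (n : ℕ) (b : E d) :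
    colMat w n *ᵥ (((colMat v n)ᵀ * colMat q n)⁻¹ *ᵥ ((colMat v n)ᵀ *ᵥ b)) =
      ⇑(∑ j ∈ range n, obliqueCoeffs v q n b j • w j) := by
  rw [← colMat_mulVec]
  congr 1
  ext i
  simp [obliqueCoeffs]

lemma inner_sub_sum_obliqueCoeffs {v q : ℕ → E d} {n : ℕ}
    (h : ((colMat v n)ᵀ * colMat q n).det ≠ 0) (b : E d) {i : ℕ} (hi : i < n) :
    ⟪v i, b - ∑ j ∈ range n, obliqueCoeffs v q n b j • q j⟫_ℝ = 0 := by
  have hsolve : (colMat v n)ᵀ *ᵥ ⇑(b - ∑ j ∈ range n, obliqueCoeffs v q n b j • q j) = 0 := by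
    rw [WithLp.ofLp_sub, Matrix.mulVec_sub, ← colMat_mulVec_obliqueCoeffs, Matrix.mulVec_mulVec,
      Matrix.mulVec_mulVec, Matrix.mul_nonsing_inv _ h.isUnit, Matrix.one_mulVec, sub_self]
  rw [transpose_colMat_mulVec] at hsolve
  exact congrFun hsolve ⟨i, hi⟩

section

variable (typeII : Bool) (dx dr : ℕ → E d)

def modifiedStep (a : ℕ) (p q : ℕ → E d) : E d × E d :=
  let ζ := obliqueCoeffs (if typeII then q else p) q a (dr a)
  (dx a - ∑ i ∈ range a, ζ i • p i, dr a - ∑ i ∈ range a, ζ i • q i)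

lemma modifiedStep_congr {a : ℕ} {p p' q q' : ℕ → E d} (hp : ∀ i < a, p i = p' i)
    (hq : ∀ i < a, q i = q' i) :
    modifiedStep typeII dx dr a p q = modifiedStep typeII dx dr a p' q' := by
  have hv : ∀ i < a, (if typeII then q else p) i = (if typeII then q' else p') i := by
    cases typeII <;> simpa
  simp only [modifiedStep, obliqueCoeffs_congr hv hq]
  congr 2 <;> refine Finset.sum_congr rfl fun i hi => ?_
  · rw [hp i (mem_range.1 hi)]
  · rw [hq i (mem_range.1 hi)]

-- The truncation to `i < a` only serves termination; `modifiedPair_eq` removes it.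
def modifiedPair (a : ℕ) : E d × E d :=
  modifiedStep typeII dx dr a
    (fun i => if _ : i < a then (modifiedPair i).1 else 0)
    (fun i => if _ : i < a then (modifiedPair i).2 else 0)
termination_by a

def modP (a : ℕ) : E d := (modifiedPair typeII dx dr a).1

def modQ (a : ℕ) : E d := (modifiedPair typeII dx dr a).2

def modV (a : ℕ) : E d := if typeII then modQ typeII dx dr a else modP typeII dx dr a

def modZeta (a : ℕ) : ℕ → ℝ :=
  obliqueCoeffs (modV typeII dx dr) (modQ typeII dx dr) a (dr a)

lemma modifiedPair_eq (a : ℕ) : modifiedPair typeII dx dr a =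
    modifiedStep typeII dx dr a (modP typeII dx dr) (modQ typeII dx dr) := by
  rw [modifiedPair]
  exact modifiedStep_congr typeII dx dr (fun i hi => dif_pos hi) (fun i hi => dif_pos hi)

lemma modP_eq (a : ℕ) : modP typeII dx dr a =
    dx a - ∑ i ∈ range a, modZeta typeII dx dr a i • modP typeII dx dr i := by
  rw [modP, modifiedPair_eq]
  cases typeII <;> rfl

lemma modQ_eq (a : ℕ) : modQ typeII dx dr a =
    dr a - ∑ i ∈ range a, modZeta typeII dx dr a i • modQ typeII dx dr i := by
  rw [modQ, modifiedPair_eq]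
  cases typeII <;> rfl

lemma modV_eq (a : ℕ) : modV typeII dx dr a = (if typeII then dr else dx) a -
    ∑ i ∈ range a, modZeta typeII dx dr a i • modV typeII dx dr i := by
  cases typeII
  exacts [modP_eq false dx dr a, modQ_eq true dx dr a]

lemma det_transpose_colMat_modV_mul_colMat_modQ (n : ℕ) :
    ((colMat (modV typeII dx dr) n)ᵀ * colMat (modQ typeII dx dr) n).det =
      ((colMat (if typeII then dr else dx) n)ᵀ * colMat dr n).det := by
  rw [colMat_eq_mul_unitUpper (modV_eq typeII dx dr) n,
    colMat_eq_mul_unitUpper (modQ_eq typeII dx dr) n, Matrix.transpose_mul,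
    Matrix.mul_assoc, ← Matrix.mul_assoc (colMat _ n)ᵀ, Matrix.det_mul, Matrix.det_mul,
    Matrix.det_transpose, det_unitUpper, one_mul, mul_one]

lemma inner_modV_sub_sum_obliqueCoeffs {n : ℕ}
    (hdet : ((colMat (if typeII then dr else dx) n)ᵀ * colMat dr n).det ≠ 0) (b : E d) {i : ℕ}
    (hi : i < n) :
    ⟪modV typeII dx dr i, b - ∑ l ∈ range n,
      obliqueCoeffs (modV typeII dx dr) (modQ typeII dx dr) n b l • modQ typeII dx dr l⟫_ℝ = 0 :=
  inner_sub_sum_obliqueCoeffs (by rwa [det_transpose_colMat_modV_mul_colMat_modQ]) b hi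

lemma inner_modV_modQ_of_lt {a : ℕ}
    (hdet : ((colMat (if typeII then dr else dx) a)ᵀ * colMat dr a).det ≠ 0) {i : ℕ}
    (hi : i < a) : ⟪modV typeII dx dr i, modQ typeII dx dr a⟫_ℝ = 0 := by
  rw [modQ_eq]
  exact inner_modV_sub_sum_obliqueCoeffs typeII dx dr hdet (dr a) hi

lemma add_mvE_eq_modifiedUpdate (n : ℕ) (x₀ r₀ : E d) (β : ℝ) :
    x₀ + mvE (β • (1 : Matrix (Fin d) (Fin d) ℝ) - (colMat dx n + β • colMat dr n) *
        ((colMat (if typeII then dr else dx) n)ᵀ * colMat dr n)⁻¹ *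
          (colMat (if typeII then dr else dx) n)ᵀ) r₀ =
      (x₀ - ∑ l ∈ range n, obliqueCoeffs (modV typeII dx dr) (modQ typeII dx dr) n r₀ l •
          modP typeII dx dr l) +
        β • (r₀ - ∑ l ∈ range n, obliqueCoeffs (modV typeII dx dr) (modQ typeII dx dr) n r₀ l •
          modQ typeII dx dr l) := by
  have hproj : (colMat dx n + β • colMat dr n) *
      ((colMat (if typeII then dr else dx) n)ᵀ * colMat dr n)⁻¹ *
        (colMat (if typeII then dr else dx) n)ᵀ =
      (colMat (modP typeII dx dr) n + β • colMat (modQ typeII dx dr) n) *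
        ((colMat (modV typeII dx dr) n)ᵀ * colMat (modQ typeII dx dr) n)⁻¹ *
          (colMat (modV typeII dx dr) n)ᵀ := by
    rw [colMat_eq_mul_unitUpper (modV_eq typeII dx dr) n,
      colMat_eq_mul_unitUpper (modP_eq typeII dx dr) n,
      colMat_eq_mul_unitUpper (modQ_eq typeII dx dr) n, ← Matrix.smul_mul, ← Matrix.add_mul]
    exact mul_inv_transpose_mul_mul_right_eq _ _ _ (by simp [det_unitUpper])
  apply WithLp.ofLp_injective
  rw [WithLp.ofLp_add, ofLp_mvE, hproj, Matrix.sub_mulVec, Matrix.smul_mulVec, Matrix.one_mulVec,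
    ← Matrix.mulVec_mulVec, ← Matrix.mulVec_mulVec, Matrix.add_mulVec, Matrix.smul_mulVec,
    colMat_mulVec_obliqueCoeffs, colMat_mulVec_obliqueCoeffs]
  simp only [WithLp.ofLp_add, WithLp.ofLp_sub, WithLp.ofLp_smul]
  module

end

section

variable {typeII : Bool} {dx dr : ℕ → E d} {m : ℕ}

lemma inner_modV_modQ_eq_zero
    (hdet : ∀ a < m, ((colMat (if typeII then dr else dx) (a + 1))ᵀ *
      colMat dr (a + 1)).det ≠ 0) {i j : ℕ} (hij : i < j) (hj : j < m) :
    ⟪modV typeII dx dr i, modQ typeII dx dr j⟫_ℝ = 0 := by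
  obtain ⟨a, rfl⟩ : ∃ a, j = a + 1 := ⟨j - 1, by omega⟩
  exact inner_modV_modQ_of_lt typeII dx dr (hdet a (by omega)) hij

lemma inner_modV_modQ_self_ne_zero
    (hdet : ∀ a < m, ((colMat (if typeII then dr else dx) (a + 1))ᵀ *
      colMat dr (a + 1)).det ≠ 0) {a : ℕ} (ha : a < m) :
    ⟪modV typeII dx dr a, modQ typeII dx dr a⟫_ℝ ≠ 0 := by
  have hlower : ((colMat (modV typeII dx dr) (a + 1))ᵀ *
      colMat (modQ typeII dx dr) (a + 1)).IsLowerTriangular := fun i j (hij : i < j) => by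
    rw [transpose_colMat_mul_colMat]
    exact inner_modV_modQ_eq_zero hdet hij (by omega)
  have hprod := hdet a ha
  rw [← det_transpose_colMat_modV_mul_colMat_modQ, Matrix.det_of_isLowerTriangular _ hlower,
    transpose_colMat_mul_colMat] at hprod
  simpa using prod_ne_zero_iff.1 hprod ⟨a, by omega⟩ (mem_univ _)

end

end ModifiedAM

open ModifiedAM in
theorem stmt_0_general {d : ℕ} (x : ℕ → E d) (r : ℕ → E d)
    (β : ℕ → ℝ)
    (typeII : Bool) (k0 mk : ℕ)
    (X R Z : (a : ℕ) → Matrix (Fin d) (Fin (a + 1)) ℝ)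
    (hX : ∀ a, X a = Matrix.of fun c (i : Fin (a + 1)) =>
      (x (k0 + (i : ℕ) + 1) - x (k0 + (i : ℕ))) c)
    (hR : ∀ a, R a = Matrix.of fun c (i : Fin (a + 1)) =>
      (r (k0 + (i : ℕ) + 1) - r (k0 + (i : ℕ))) c)
    (hZ : ∀ a, Z a = if typeII then R a else X a)
    (hdet : ∀ a < mk, ((Z a)ᵀ * R a).det ≠ 0)
    (hAM : ∀ a < mk, x (k0 + a + 2) = x (k0 + a + 1) +
      mvE (β (k0 + 1 + a) • (1 : Matrix (Fin d) (Fin d) ℝ)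
            - (X a + β (k0 + 1 + a) • R a) * ((Z a)ᵀ * R a)⁻¹ * (Z a)ᵀ)
          (r (k0 + a + 1))) :
    ∃ (p q : ℕ → E d) (ζ Γ : ℕ → ℕ → ℝ),
      -- well-definedness of the procedures (2.6) and (2.7)
      (∀ a < mk, ⟪(if typeII then q (k0 + 1 + a) else p (k0 + 1 + a)), q (k0 + 1 + a)⟫_ℝ ≠ 0) ∧
      -- the modified vector pairs
      (p (k0 + 1) = x (k0 + 1) - x k0 ∧ q (k0 + 1) = r (k0 + 1) - r k0) ∧
      (∀ a, 1 ≤ a → a < mk →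
        p (k0 + 1 + a) = (x (k0 + 1 + a) - x (k0 + a))
            - ∑ i ∈ Finset.range a, ζ (k0 + 1 + a) i • p (k0 + 1 + i) ∧
        q (k0 + 1 + a) = (r (k0 + 1 + a) - r (k0 + a))
            - ∑ i ∈ Finset.range a, ζ (k0 + 1 + a) i • q (k0 + 1 + i) ∧
        ∀ i < a, ⟪(if typeII then q (k0 + 1 + i) else p (k0 + 1 + i)), q (k0 + 1 + a)⟫_ℝ = 0) ∧
      -- property 1 : `X_k = P_k S_k` and `R_k = Q_k S_k`, `S_k` unit upper triangular
      (∃ Sm : Matrix (Fin mk) (Fin mk) ℝ,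
        (∀ i, Sm i i = 1) ∧ (∀ i j : Fin mk, (j : ℕ) < (i : ℕ) → Sm i j = 0) ∧
        (Matrix.of fun c (i : Fin mk) => (x (k0 + (i : ℕ) + 1) - x (k0 + (i : ℕ))) c)
          = (Matrix.of fun c (i : Fin mk) => p (k0 + 1 + (i : ℕ)) c) * Sm ∧
        (Matrix.of fun c (i : Fin mk) => (r (k0 + (i : ℕ) + 1) - r (k0 + (i : ℕ))) c)
          = (Matrix.of fun c (i : Fin mk) => q (k0 + 1 + (i : ℕ)) c) * Sm) ∧
      -- property 2 : `V_kᵀ Q_k` is lower triangular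
      (∀ i j : ℕ, i < j → j < mk →
        ⟪(if typeII then q (k0 + 1 + i) else p (k0 + 1 + i)), q (k0 + 1 + j)⟫_ℝ = 0) ∧
      -- property 3 and coincidence with the original AM iterates
      (∀ a < mk,
        (∀ i ≤ a, ⟪(if typeII then q (k0 + 1 + i) else p (k0 + 1 + i)),
            r (k0 + 1 + a) - ∑ l ∈ Finset.range (a + 1), Γ (k0 + 1 + a) l • q (k0 + 1 + l)⟫_ℝ
            = 0) ∧
        x (k0 + a + 2) =
          (x (k0 + 1 + a) - ∑ l ∈ Finset.range (a + 1), Γ (k0 + 1 + a) l • p (k0 + 1 + l))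
          + β (k0 + 1 + a) •
              (r (k0 + 1 + a) - ∑ l ∈ Finset.range (a + 1), Γ (k0 + 1 + a) l • q (k0 + 1 + l))) := by
  set dx : ℕ → E d := fun a => x (k0 + a + 1) - x (k0 + a)
  set dr : ℕ → E d := fun a => r (k0 + a + 1) - r (k0 + a)
  have hX' : ∀ a, X a = colMat dx (a + 1) := hX
  have hR' : ∀ a, R a = colMat dr (a + 1) := hR
  have hZ' : ∀ a, Z a = colMat (if typeII then dr else dx) (a + 1) := fun a => by
    cases typeII <;> simp [hZ, hX', hR']
  have hdet' : ∀ a < mk,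
      ((colMat (if typeII then dr else dx) (a + 1))ᵀ * colMat dr (a + 1)).det ≠ 0 := by
    simpa only [hZ', hR'] using hdet
  refine ⟨fun n => modP typeII dx dr (n - (k0 + 1)), fun n => modQ typeII dx dr (n - (k0 + 1)),
    fun n => modZeta typeII dx dr (n - (k0 + 1)),
    fun n => obliqueCoeffs (modV typeII dx dr) (modQ typeII dx dr) (n - (k0 + 1) + 1) (r n),
    fun a ha => ?_, ?_, fun a _ ha => ?_,
    ⟨unitUpper (modZeta typeII dx dr) mk, unitUpper_apply_self _,
      fun _ _ h => isUpperTriangular_unitUpper _ _ h, ?_, ?_⟩,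
    ?_, fun a ha => ⟨fun i hi => ?_, ?_⟩⟩ <;>
    simp only [Nat.add_sub_cancel_left, Nat.sub_self]
  · exact inner_modV_modQ_self_ne_zero hdet' ha
  · exact ⟨by rw [modP_eq]; simp [dx], by rw [modQ_eq]; simp [dr]⟩
  · exact ⟨by rw [modP_eq, Nat.add_right_comm k0 1 a], by rw [modQ_eq, Nat.add_right_comm k0 1 a],
      fun i hi => inner_modV_modQ_eq_zero hdet' hi ha⟩
  · exact colMat_eq_mul_unitUpper (modP_eq typeII dx dr) mk
  · exact colMat_eq_mul_unitUpper (modQ_eq typeII dx dr) mk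
  · exact fun i j hij hj => inner_modV_modQ_eq_zero hdet' hij hj
  · exact inner_modV_sub_sum_obliqueCoeffs typeII dx dr (hdet' a ha) _ (Nat.lt_succ_of_le hi)
  · rw [hAM a ha, hX', hR', hZ', Nat.add_right_comm k0 1 a]
    exact add_mvE_eq_modifiedUpdate typeII dx dr (a + 1) _ _ _

/-- Proposition 2.1 of the paper.  Consider a window of
iterations `j = k0+1, …, k0+mk` of the AM method (`k0 = k - m_k` is the restart
point, so the memory sizes are `m_j = j - k0`), generated by the *original* AM
update `x_{j+1} = x_j + G_j r_j` with
`G_j = β_j I - (X_j + β_j R_j)(Z_jᵀ R_j)⁻¹ Z_jᵀ`.  If `det(Z_jᵀ R_j) ≠ 0`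
throughout the window, then the modified-sequence procedures are well defined
(`v_jᵀ q_j ≠ 0`): there exist `p, q, ζ, Γ` satisfying the recursions
(2.6)–(2.7) such that (1) `X_k = P_k S_k` and `R_k = Q_k S_k` with `S_k` unit
upper triangular, (2) `V_kᵀ Q_k` is lower triangular, (3) `r̄_j ⊥ range(V_j)`,
and the AM update with modified sequences reproduces the iterates
`x_{k-m_k+1}, …, x_{k+1}`. -/
theorem stmt_0 {d : ℕ} (g : E d → E d) (x : ℕ → E d) (r : ℕ → E d)
    (hr : ∀ j, r j = g (x j) - x j)
    (β : ℕ → ℝ) (hβ : ∀ j, 0 < β j)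
    (typeII : Bool) (k0 mk : ℕ) (hmk : 1 ≤ mk)
    (X R Z : (a : ℕ) → Matrix (Fin d) (Fin (a + 1)) ℝ)
    (hX : ∀ a, X a = Matrix.of fun c (i : Fin (a + 1)) =>
      (x (k0 + (i : ℕ) + 1) - x (k0 + (i : ℕ))) c)
    (hR : ∀ a, R a = Matrix.of fun c (i : Fin (a + 1)) =>
      (r (k0 + (i : ℕ) + 1) - r (k0 + (i : ℕ))) c)
    (hZ : ∀ a, Z a = if typeII then R a else X a)
    (hdet : ∀ a < mk, ((Z a)ᵀ * R a).det ≠ 0)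
    (hAM : ∀ a < mk, x (k0 + a + 2) = x (k0 + a + 1) +
      mvE (β (k0 + 1 + a) • (1 : Matrix (Fin d) (Fin d) ℝ)
            - (X a + β (k0 + 1 + a) • R a) * ((Z a)ᵀ * R a)⁻¹ * (Z a)ᵀ)
          (r (k0 + a + 1))) :
    ∃ (p q : ℕ → E d) (ζ Γ : ℕ → ℕ → ℝ),
      -- well-definedness of the procedures (2.6) and (2.7)
      (∀ a < mk, ⟪(if typeII then q (k0 + 1 + a) else p (k0 + 1 + a)), q (k0 + 1 + a)⟫_ℝ ≠ 0) ∧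
      -- the modified vector pairs
      (p (k0 + 1) = x (k0 + 1) - x k0 ∧ q (k0 + 1) = r (k0 + 1) - r k0) ∧
      (∀ a, 1 ≤ a → a < mk →
        p (k0 + 1 + a) = (x (k0 + 1 + a) - x (k0 + a))
            - ∑ i ∈ Finset.range a, ζ (k0 + 1 + a) i • p (k0 + 1 + i) ∧
        q (k0 + 1 + a) = (r (k0 + 1 + a) - r (k0 + a))
            - ∑ i ∈ Finset.range a, ζ (k0 + 1 + a) i • q (k0 + 1 + i) ∧
        ∀ i < a, ⟪(if typeII then q (k0 + 1 + i) else p (k0 + 1 + i)), q (k0 + 1 + a)⟫_ℝ = 0) ∧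
      -- property 1 : `X_k = P_k S_k` and `R_k = Q_k S_k`, `S_k` unit upper triangular
      (∃ Sm : Matrix (Fin mk) (Fin mk) ℝ,
        (∀ i, Sm i i = 1) ∧ (∀ i j : Fin mk, (j : ℕ) < (i : ℕ) → Sm i j = 0) ∧
        (Matrix.of fun c (i : Fin mk) => (x (k0 + (i : ℕ) + 1) - x (k0 + (i : ℕ))) c)
          = (Matrix.of fun c (i : Fin mk) => p (k0 + 1 + (i : ℕ)) c) * Sm ∧
        (Matrix.of fun c (i : Fin mk) => (r (k0 + (i : ℕ) + 1) - r (k0 + (i : ℕ))) c)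
          = (Matrix.of fun c (i : Fin mk) => q (k0 + 1 + (i : ℕ)) c) * Sm) ∧
      -- property 2 : `V_kᵀ Q_k` is lower triangular
      (∀ i j : ℕ, i < j → j < mk →
        ⟪(if typeII then q (k0 + 1 + i) else p (k0 + 1 + i)), q (k0 + 1 + j)⟫_ℝ = 0) ∧
      -- property 3 and coincidence with the original AM iterates
      (∀ a < mk,
        (∀ i ≤ a, ⟪(if typeII then q (k0 + 1 + i) else p (k0 + 1 + i)),
            r (k0 + 1 + a) - ∑ l ∈ Finset.range (a + 1), Γ (k0 + 1 + a) l • q (k0 + 1 + l)⟫_ℝ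
            = 0) ∧
        x (k0 + a + 2) =
          (x (k0 + 1 + a) - ∑ l ∈ Finset.range (a + 1), Γ (k0 + 1 + a) l • p (k0 + 1 + l))
          + β (k0 + 1 + a) •
              (r (k0 + 1 + a) - ∑ l ∈ Finset.range (a + 1), Γ (k0 + 1 + a) l • q (k0 + 1 + l))) :=
  stmt_0_general x r β typeII k0 mk X R Z hX hR hZ hdet hAM
end
end

section
/- Consider the fixed-point problem x = g(x) with g(x) = (I−A)x + b, where A ∈ ℝ^{d×d} is nonsingular and b ∈ ℝ^d, and let {x_k} be generated by the full-memory Type-I/Type-II AM (m_k = k) with nonzero mixing parameters β_j. If det(Z_jᵀR_j) ≠ 0 for j = 1, …, k, then: (1) R_k = −AX_k and range(X_k) = K_k(A, r_0); (2) for the Type-I method, the intermediate iterate x̄_k = x_k − X_kΓ_k satisfies x̄_k ∈ x_0 + K_k(A, r_0) and b − Ax̄_k ⊥ K_k(A, r_0), i.e., x̄_k is the k-th iterate of Arnoldi's method started at x_0; (3) for the Type-II method, x̄_k ∈ x_0 + K_k(A, r_0) and b − Ax̄_k ⊥ A·K_k(A, r_0), equivalently x̄_k minimizes ‖b − Az‖₂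 over z ∈ x_0 + K_k(A, r_0), i.e., x̄_k is the k-th GMRES iterate started at x_0. -/
open scoped InnerProductSpace
open Finset Matrix

noncomputable section

/-!
Since `r_j = b - A x_j`, residual differences are `Δr_j = -A Δx_j`, i.e. `R_k = -A X_k`. An AM step
`Δx_i = β_i r_i - (X_i + β_i R_i) w` therefore lies in `span {r_i} + range X_i + A (range X_i)`, and
induction on `i` gives `range X_i ⊆ K_i(A, r_0)`. Nonsingularity of `Z_kᵀ R_k = -Z_kᵀ A X_k` makes the
`k` columns of `X_k` independent, so this inclusion is an equality by counting dimensions. The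
conditions defining `Γ_k` say that `b - A x̄_k = r_k - R_k Γ_k` is orthogonal to `range Z_k`, which is
`K_k` for Type I and `A K_k` for Type II; in the latter case Pythagoras shows that `x̄_k` minimises the
residual over `x_0 + K_k`.
-/

section Krylov

variable {R V : Type*} [Ring R] [AddCommGroup V] [Module R V]

def krylov (T : Module.End R V) (v : V) (k : ℕ) : Submodule R V :=
  Submodule.span R (Set.range fun i : Fin k => (T ^ (i : ℕ)) v)

variable (R) in
/-- `range X_k`, where `X_k` has the columns `x (l + 1) - x l`, `l < k`. -/
def diffSpan (x : ℕ → V) (k : ℕ) : Submodule R V :=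
  Submodule.span R (Set.range fun l : Fin k => x (l + 1) - x l)

variable {T : Module.End R V} {v b : V} {x r : ℕ → V}

theorem krylov_mono (T : Module.End R V) (v : V) : Monotone (krylov T v) :=
  fun _ _ hab => Submodule.span_mono <| by
    rintro _ ⟨i, rfl⟩
    exact ⟨Fin.castLE hab i, rfl⟩

theorem self_mem_krylov {k : ℕ} (hk : 0 < k) : v ∈ krylov T v k :=
  Submodule.subset_span ⟨⟨0, hk⟩, by simp⟩

theorem map_krylov_le (T : Module.End R V) (v : V) (k : ℕ) :
    (krylov T v k).map T ≤ krylov T v (k + 1) := by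
  rw [krylov, Submodule.map_span, Submodule.span_le]
  rintro _ ⟨_, ⟨i, rfl⟩, rfl⟩
  exact Submodule.subset_span ⟨i.succ, by simp [pow_succ', Module.End.mul_apply]⟩

theorem sub_mem_diffSpan {l k : ℕ} (h : l < k) : x (l + 1) - x l ∈ diffSpan R x k :=
  Submodule.subset_span ⟨⟨l, h⟩, rfl⟩

theorem sub_zero_mem_diffSpan (x : ℕ → V) (k : ℕ) : x k - x 0 ∈ diffSpan R x k := by
  rw [← Finset.sum_range_sub]
  exact Submodule.sum_mem _ fun l hl => sub_mem_diffSpan (Finset.mem_range.1 hl)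

theorem sub_sum_smul_sub_mem_diffSpan (x : ℕ → V) (Γ : ℕ → R) (k : ℕ) :
    x k - ∑ l ∈ Finset.range k, Γ l • (x (l + 1) - x l) - x 0 ∈ diffSpan R x k := by
  rw [sub_right_comm]
  exact sub_mem (sub_zero_mem_diffSpan x k) (Submodule.sum_mem _ fun l hl =>
    Submodule.smul_mem _ _ (sub_mem_diffSpan (Finset.mem_range.1 hl)))

theorem sub_residual_eq (hr : ∀ j, r j = b - T (x j)) (i j : ℕ) :
    r i - r j = -T (x i - x j) := by
  rw [hr, hr, map_sub]
  abel

theorem residual_extrapolation_eq (hr : ∀ j, r j = b - T (x j)) (Γ : ℕ → R) (k : ℕ) :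
    b - T (x k - ∑ l ∈ Finset.range k, Γ l • (x (l + 1) - x l))
      = r k - ∑ l ∈ Finset.range k, Γ l • (r (l + 1) - r l) := by
  simp only [map_sub, map_sum, map_smul, sub_residual_eq hr, smul_neg, Finset.sum_neg_distrib, hr k]
  abel

/-- `hstep` is the shape of an AM step `Δx_i = β_i r_i - (X_i + β_i R_i) w` with `R_i = -T X_i`. -/
theorem diffSpan_le_krylov (hr : ∀ j, r j = b - T (x j)) {k : ℕ}
    (hstep : ∀ i < k, x (i + 1) - x i ∈ (R ∙ r i) ⊔ diffSpan R x i ⊔ (diffSpan R x i).map T) :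
    ∀ i ≤ k, diffSpan R x i ≤ krylov T (r 0) i := by
  intro i hi
  induction i with
  | zero => simp [diffSpan]
  | succ i ih =>
    have ih := ih (by omega)
    have hD : diffSpan R x i ≤ krylov T (r 0) (i + 1) := ih.trans (krylov_mono _ _ i.le_succ)
    have hTD : (diffSpan R x i).map T ≤ krylov T (r 0) (i + 1) :=
      (Submodule.map_mono ih).trans (map_krylov_le _ _ _)
    have hres : r i ∈ krylov T (r 0) (i + 1) := by
      rw [← add_sub_cancel (r 0) (r i), sub_residual_eq hr]
      exact add_mem (self_mem_krylov i.succ_pos)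
        (neg_mem (hTD (Submodule.mem_map_of_mem (sub_zero_mem_diffSpan x i))))
    have hinc : x (i + 1) - x i ∈ krylov T (r 0) (i + 1) :=
      sup_le (sup_le ((Submodule.span_singleton_le_iff_mem _ _).2 hres) hD) hTD (hstep i hi)
    rw [diffSpan, Submodule.span_le]
    rintro _ ⟨l, rfl⟩
    rcases Nat.lt_succ_iff_lt_or_eq.1 l.isLt with hl | hl
    · exact hD (sub_mem_diffSpan hl)
    · simp only [SetLike.mem_coe, hl]
      exact hinc

end Krylov

theorem span_range_eq_of_le_of_linearIndependent {K V : Type*} [Field K] [AddCommGroup V]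
    [Module K V] {k : ℕ} {f g : Fin k → V} (hind : LinearIndependent K f)
    (hle : Submodule.span K (Set.range f) ≤ Submodule.span K (Set.range g)) :
    Submodule.span K (Set.range f) = Submodule.span K (Set.range g) :=
  have := FiniteDimensional.span_of_finite K (Set.finite_range g)
  Submodule.eq_of_le_of_finrank_le hle <| by
    rw [finrank_span_eq_card hind, Fintype.card_fin]
    exact (finrank_range_le_card g).trans_eq (Fintype.card_fin k)

section Galerkin

variable {𝕜 V W : Type*} [RCLike 𝕜] [NormedAddCommGroup V] [InnerProductSpace 𝕜 V]
  [NormedAddCommGroup W] [InnerProductSpace 𝕜 W]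

theorem inner_eq_zero_of_mem_span_range {ι : Type*} {f : ι → V} {y : V}
    (h : ∀ i, ⟪f i, y⟫_𝕜 = 0) {u : V} (hu : u ∈ Submodule.span 𝕜 (Set.range f)) :
    ⟪u, y⟫_𝕜 = 0 := by
  have hle : Submodule.span 𝕜 (Set.range f) ≤ (𝕜 ∙ y)ᗮ := by
    rw [Submodule.span_le]
    rintro _ ⟨i, rfl⟩
    exact Submodule.mem_orthogonal_singleton_iff_inner_left.2 (h i)
  exact Submodule.mem_orthogonal_singleton_iff_inner_left.1 (hle hu)

theorem inner_map_eq_zero_of_mem_span_range (T : V →ₗ[𝕜] W) {ι : Type*} {f : ι → V} {y : W}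
    (h : ∀ i, ⟪T (f i), y⟫_𝕜 = 0) {u : V} (hu : u ∈ Submodule.span 𝕜 (Set.range f)) :
    ⟪T u, y⟫_𝕜 = 0 := by
  refine inner_eq_zero_of_mem_span_range (f := T ∘ f) h ?_
  rw [Set.range_comp, ← Submodule.map_span]
  exact Submodule.mem_map_of_mem hu

theorem norm_le_norm_add_of_inner_eq_zero {x y : V} (h : ⟪x, y⟫_𝕜 = 0) : ‖x‖ ≤ ‖x + y‖ := by
  rw [mul_self_le_mul_self_iff (norm_nonneg _) (norm_nonneg _),
    norm_add_sq_eq_norm_sq_add_norm_sq_of_inner_eq_zero x y h]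
  exact le_add_of_nonneg_right (mul_self_nonneg _)

theorem norm_sub_map_le_of_inner_map_eq_zero (T : V →ₗ[𝕜] W) {K : Submodule 𝕜 V} {b : W}
    {y z : V} (hy : ∀ u ∈ K, ⟪T u, b - T y⟫_𝕜 = 0) (hyz : y - z ∈ K) :
    ‖b - T y‖ ≤ ‖b - T z‖ := by
  have hsplit : b - T z = (b - T y) + T (y - z) := by
    rw [map_sub]
    abel
  rw [hsplit]
  exact norm_le_norm_add_of_inner_eq_zero (𝕜 := 𝕜) (by rw [← inner_conj_symm, hy _ hyz, map_zero])

end Galerkin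

section Matrix

variable {d m : ℕ}

theorem mvE_pow (A : Matrix (Fin d) (Fin d) ℝ) (n : ℕ) (u : E d) :
    mvE (A ^ n) u = (toEuclideanLin A ^ n) u := by
  simp [mvE]

theorem span_mvE_pow_eq_krylov (A : Matrix (Fin d) (Fin d) ℝ) (v : E d) (k : ℕ) :
    Submodule.span ℝ (Set.range fun i : Fin k => mvE (A ^ (i : ℕ)) v)
      = krylov (toEuclideanLin A) v k := by
  simp only [mvE_pow]
  rfl

theorem mvE_of_cols (f : Fin m → E d) (w : E m) :
    mvE (of fun c i => f i c) w = ∑ i, w i • f i := by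
  ext c
  simp [mvE, toLpLin_apply, mulVec, dotProduct, mul_comm]

theorem mul_of_cols {n : ℕ} (A : Matrix (Fin n) (Fin d) ℝ) (f : Fin m → E d) :
    A * of (fun c i => f i c) = of fun c i => mvE A (f i) c := by
  ext c i
  simp [mvE, toLpLin_apply, mul_apply, mulVec, dotProduct]

theorem of_residual_diffs_eq_neg_mul {A : Matrix (Fin d) (Fin d) ℝ} {b : E d} {x r : ℕ → E d}
    (hr : ∀ j, r j = b - mvE A (x j)) (k : ℕ) :
    (of fun c (i : Fin k) => (r (i + 1) - r i) c)
      = -(A * of fun c (i : Fin k) => (x (i + 1) - x i) c) := by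
  rw [mul_of_cols]
  ext c i
  simp [sub_residual_eq (T := toEuclideanLin A) hr, mvE]

theorem linearIndependent_of_det_mul_of_cols_ne_zero {M : Matrix (Fin m) (Fin d) ℝ}
    {f : Fin m → E d} (h : (M * of fun c i => f i c).det ≠ 0) : LinearIndependent ℝ f := by
  have hinj : Function.Injective (of fun c i => f i c : Matrix (Fin d) (Fin m) ℝ).mulVec := by
    refine Function.Injective.of_comp (f := M.mulVec) ?_
    simpa [Function.comp_def, mulVec_mulVec] using mulVec_injective_of_det_ne_zero h
  exact LinearIndependent.of_comp (WithLp.linearEquiv 2 ℝ (Fin d → ℝ)).toLinearMap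
    (Matrix.mulVec_injective_iff.1 hinj)

theorem mvE_amUpdate_mem {A : Matrix (Fin d) (Fin d) ℝ} {f : Fin m → E d}
    {X R : Matrix (Fin d) (Fin m) ℝ} (hX : X = of fun c i => f i c) (hR : R = -(A * X))
    (β : ℝ) (N : Matrix (Fin m) (Fin d) ℝ) (u : E d) :
    mvE (β • 1 - (X + β • R) * N) u ∈
      (ℝ ∙ u) ⊔ Submodule.span ℝ (Set.range f)
        ⊔ (Submodule.span ℝ (Set.range f)).map (toEuclideanLin A) := by
  have hw : mvE X (mvE N u) ∈ Submodule.span ℝ (Set.range f) := by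
    rw [hX, mvE_of_cols]
    exact Submodule.sum_mem _ fun i _ => Submodule.smul_mem _ _ (Submodule.subset_span ⟨i, rfl⟩)
  have hupd : mvE (β • 1 - (X + β • R) * N) u
      = β • u - mvE X (mvE N u) + β • toEuclideanLin A (mvE X (mvE N u)) := by
    simp only [mvE, hR, smul_neg, map_sub, map_smul, toLpLin_one, toLpLin_mul_same, map_add,
      map_neg, LinearMap.sub_apply, LinearMap.smul_apply, LinearMap.id_coe, id_eq,
      LinearMap.coe_comp, Function.comp_apply, LinearMap.add_apply, LinearMap.neg_apply]
    abel
  rw [hupd]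
  refine add_mem (sub_mem ?_ ?_) ?_
  · exact Submodule.mem_sup_left
      (Submodule.mem_sup_left (Submodule.smul_mem _ _ (Submodule.mem_span_singleton_self u)))
  · exact Submodule.mem_sup_left (Submodule.mem_sup_right hw)
  · exact Submodule.smul_mem _ _ (Submodule.mem_sup_right (Submodule.mem_map_of_mem hw))

end Matrix

theorem stmt_1_general {d : ℕ} (A : Matrix (Fin d) (Fin d) ℝ) (b : E d)
    (typeII : Bool) (β : ℕ → ℝ)
    (x : ℕ → E d) (r : ℕ → E d) (hr : ∀ j, r j = b - mvE A (x j))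
    (k : ℕ) (hk : 1 ≤ k)
    (X R Z : (j : ℕ) → Matrix (Fin d) (Fin j) ℝ)
    (hX : ∀ j, X j = Matrix.of fun c (i : Fin j) => (x ((i : ℕ) + 1) - x (i : ℕ)) c)
    (hR : ∀ j, R j = Matrix.of fun c (i : Fin j) => (r ((i : ℕ) + 1) - r (i : ℕ)) c)
    (hdet : ∀ j, 1 ≤ j → j ≤ k → ((Z j)ᵀ * R j).det ≠ 0)
    (h0 : x 1 = x 0 + β 0 • r 0)
    (hAM : ∀ j, 1 ≤ j → j < k → x (j + 1) = x j +
      mvE (β j • (1 : Matrix (Fin d) (Fin d) ℝ)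
            - (X j + β j • R j) * ((Z j)ᵀ * R j)⁻¹ * (Z j)ᵀ) (r j))
    (Γ : ℕ → ℝ)
    (hΓ : ∀ i < k,
      ⟪(if typeII then r (i + 1) - r i else x (i + 1) - x i),
        r k - ∑ l ∈ Finset.range k, Γ l • (r (l + 1) - r l)⟫_ℝ = 0)
    (xbar : E d)
    (hxbar : xbar = x k - ∑ l ∈ Finset.range k, Γ l • (x (l + 1) - x l)) :
    -- (1)  `R_k = -A X_k` and `range(X_k) = K_k(A, r_0)`
    (R k = -(A * X k)) ∧
    (Submodule.span ℝ (Set.range fun i : Fin k => x ((i : ℕ) + 1) - x (i : ℕ))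
      = Submodule.span ℝ (Set.range fun i : Fin k => mvE (A ^ (i : ℕ)) (r 0))) ∧
    -- (2)  Type-I: `x̄_k` is the `k`-th Arnoldi iterate with starting point `x_0`
    (typeII = false →
      xbar - x 0 ∈ Submodule.span ℝ (Set.range fun i : Fin k => mvE (A ^ (i : ℕ)) (r 0)) ∧
      ∀ u ∈ Submodule.span ℝ (Set.range fun i : Fin k => mvE (A ^ (i : ℕ)) (r 0)),
        ⟪u, b - mvE A xbar⟫_ℝ = 0) ∧
    -- (3)  Type-II: `x̄_k` is the `k`-th GMRES iterate with starting point `x_0`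
    (typeII = true →
      xbar - x 0 ∈ Submodule.span ℝ (Set.range fun i : Fin k => mvE (A ^ (i : ℕ)) (r 0)) ∧
      (∀ u ∈ Submodule.span ℝ (Set.range fun i : Fin k => mvE (A ^ (i : ℕ)) (r 0)),
        ⟪mvE A u, b - mvE A xbar⟫_ℝ = 0) ∧
      ∀ z : E d,
        z - x 0 ∈ Submodule.span ℝ (Set.range fun i : Fin k => mvE (A ^ (i : ℕ)) (r 0)) →
        ‖b - mvE A xbar‖ ≤ ‖b - mvE A z‖) := by
  set T := toEuclideanLin A
  have hrT : ∀ j, r j = b - T (x j) := hr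
  have hRX : ∀ j, R j = -(A * X j) := fun j => by
    rw [hR, hX]
    exact of_residual_diffs_eq_neg_mul hr j
  have hstep : ∀ i < k, x (i + 1) - x i ∈ (ℝ ∙ r i) ⊔ diffSpan ℝ x i ⊔ (diffSpan ℝ x i).map T := by
    rintro (_ | i) hi
    · rw [h0, add_sub_cancel_left]
      exact Submodule.mem_sup_left (Submodule.mem_sup_left
        (Submodule.smul_mem _ _ (Submodule.mem_span_singleton_self _)))
    · rw [hAM _ i.succ_pos hi, add_sub_cancel_left, Matrix.mul_assoc]
      exact mvE_amUpdate_mem (hX _) (hRX _) _ _ _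
  have hindep : LinearIndependent ℝ fun l : Fin k => x (l + 1) - x l := by
    refine linearIndependent_of_det_mul_of_cols_ne_zero (M := -((Z k)ᵀ * A)) ?_
    rw [← hX, Matrix.neg_mul, Matrix.mul_assoc, ← Matrix.mul_neg, ← hRX]
    exact hdet k hk le_rfl
  have hspan : diffSpan ℝ x k = krylov T (r 0) k :=
    span_range_eq_of_le_of_linearIndependent hindep (diffSpan_le_krylov hrT hstep k le_rfl)
  have hρ : b - mvE A xbar = r k - ∑ l ∈ Finset.range k, Γ l • (r (l + 1) - r l) :=
    hxbar ▸ residual_extrapolation_eq hrT Γ k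
  have hmem : xbar - x 0 ∈ diffSpan ℝ x k := hxbar ▸ sub_sum_smul_sub_mem_diffSpan x Γ k
  rw [span_mvE_pow_eq_krylov, ← hspan]
  refine ⟨hRX k, rfl, fun hI => ⟨hmem, fun u hu => ?_⟩, fun hII => ?_⟩
  · rw [hρ]
    exact inner_eq_zero_of_mem_span_range (fun i => by simpa [hI] using hΓ i i.isLt) hu
  · have horth : ∀ u ∈ diffSpan ℝ x k, ⟪mvE A u, b - mvE A xbar⟫_ℝ = 0 := fun u hu => by
      rw [hρ]
      refine inner_map_eq_zero_of_mem_span_range T (fun i => ?_) hu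
      have hΓi := hΓ i i.isLt
      rwa [if_pos hII, sub_residual_eq hrT, inner_neg_left, neg_eq_zero] at hΓi
    exact ⟨hmem, horth, fun z hz =>
      norm_sub_map_le_of_inner_map_eq_zero T horth (by simpa using sub_mem hmem hz)⟩

/-- Proposition 4.1, parts 1–3, of the paper.  Consider the
linear fixed-point problem `g(x) = (I-A)x + b` with `A` nonsingular, solved by
the full-memory Type-I/Type-II AM (`m_k = k`) with nonzero mixing parameters,
so that `r_j = b - A x_j`, `x_1 = x_0 + β_0 r_0` and
`x_{j+1} = x_j + G_j r_j` with `G_j = β_j I - (X_j + β_j R_j)(Z_jᵀ R_j)⁻¹ Z_jᵀ`.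
If `det(Z_jᵀ R_j) ≠ 0` for `j = 1, …, k`, then:
(1) `R_k = -A X_k` and `range(X_k) = K_k(A, r_0)`;
(2) for the Type-I method (`typeII = false`) the intermediate iterate
    `x̄_k = x_k - X_k Γ_k` satisfies `x̄_k ∈ x_0 + K_k(A, r_0)` and
    `b - A x̄_k ⊥ K_k(A, r_0)` (Arnoldi's method);
(3) for the Type-II method (`typeII = true`), `x̄_k ∈ x_0 + K_k(A, r_0)`,
    `b - A x̄_k ⊥ A·K_k(A, r_0)`, and `x̄_k` minimizes `‖b - A z‖₂` over
    `z ∈ x_0 + K_k(A, r_0)` (GMRES). -/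
theorem stmt_1 {d : ℕ} (A : Matrix (Fin d) (Fin d) ℝ) (b : E d)
    (hA : IsUnit A.det)
    (typeII : Bool) (β : ℕ → ℝ) (hβ : ∀ j, β j ≠ 0)
    (x : ℕ → E d) (r : ℕ → E d) (hr : ∀ j, r j = b - mvE A (x j))
    (k : ℕ) (hk : 1 ≤ k)
    (X R Z : (j : ℕ) → Matrix (Fin d) (Fin j) ℝ)
    (hX : ∀ j, X j = Matrix.of fun c (i : Fin j) => (x ((i : ℕ) + 1) - x (i : ℕ)) c)
    (hR : ∀ j, R j = Matrix.of fun c (i : Fin j) => (r ((i : ℕ) + 1) - r (i : ℕ)) c)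
    (hZ : ∀ j, Z j = if typeII then R j else X j)
    (hdet : ∀ j, 1 ≤ j → j ≤ k → ((Z j)ᵀ * R j).det ≠ 0)
    (h0 : x 1 = x 0 + β 0 • r 0)
    (hAM : ∀ j, 1 ≤ j → j < k → x (j + 1) = x j +
      mvE (β j • (1 : Matrix (Fin d) (Fin d) ℝ)
            - (X j + β j • R j) * ((Z j)ᵀ * R j)⁻¹ * (Z j)ᵀ) (r j))
    (Γ : ℕ → ℝ)
    (hΓ : ∀ i < k,
      ⟪(if typeII then r (i + 1) - r i else x (i + 1) - x i),
        r k - ∑ l ∈ Finset.range k, Γ l • (r (l + 1) - r l)⟫_ℝ = 0)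
    (xbar : E d)
    (hxbar : xbar = x k - ∑ l ∈ Finset.range k, Γ l • (x (l + 1) - x l)) :
    -- (1)  `R_k = -A X_k` and `range(X_k) = K_k(A, r_0)`
    (R k = -(A * X k)) ∧
    (Submodule.span ℝ (Set.range fun i : Fin k => x ((i : ℕ) + 1) - x (i : ℕ))
      = Submodule.span ℝ (Set.range fun i : Fin k => mvE (A ^ (i : ℕ)) (r 0))) ∧
    -- (2)  Type-I: `x̄_k` is the `k`-th Arnoldi iterate with starting point `x_0`
    (typeII = false →
      xbar - x 0 ∈ Submodule.span ℝ (Set.range fun i : Fin k => mvE (A ^ (i : ℕ)) (r 0)) ∧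
      ∀ u ∈ Submodule.span ℝ (Set.range fun i : Fin k => mvE (A ^ (i : ℕ)) (r 0)),
        ⟪u, b - mvE A xbar⟫_ℝ = 0) ∧
    -- (3)  Type-II: `x̄_k` is the `k`-th GMRES iterate with starting point `x_0`
    (typeII = true →
      xbar - x 0 ∈ Submodule.span ℝ (Set.range fun i : Fin k => mvE (A ^ (i : ℕ)) (r 0)) ∧
      (∀ u ∈ Submodule.span ℝ (Set.range fun i : Fin k => mvE (A ^ (i : ℕ)) (r 0)),
        ⟪mvE A u, b - mvE A xbar⟫_ℝ = 0) ∧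
      ∀ z : E d,
        z - x 0 ∈ Submodule.span ℝ (Set.range fun i : Fin k => mvE (A ^ (i : ℕ)) (r 0)) →
        ‖b - mvE A xbar‖ ≤ ‖b - mvE A z‖) :=
  stmt_1_general A b typeII β x r hr k hk X R Z hX hR hdet h0 hAM Γ hΓ xbar hxbar

end
end

section
/- Let g(x) = (I−A)x + b in the fixed-point problem x = g(x), where A ∈ ℝ^{d×d} is positive definite (its symmetric part has only positive eigenvalues) and b ∈ ℝ^d. For the restarted Type-I/Type-II AM, if m_{k+1} ≥ 2 at the (k+1)-th iteration and the exact solution has not been reached, then 1 − Γ_k^{(m_k)} ≠ 0 (so the Hessenberg matrix H_k and the scalar h_k^{(m_k+1)} of the Hessenberg construction are well defined), and AP_k = P_{k+1}H̄_k = P_kH_k + p_{k+1}·h_k^{(m_k+1)}e_{m_k}ᵀ, where H̄_k = (H_kᵀ, h_k^{(m_k+1)}e_{m_k})ᵀ ∈ ℝ^{(m_k+1)×m_k} and e_{m_k} is the m_k-th standard basis vector of ℝ^{m_k}. -/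
open scoped InnerProductSpace
open Finset Matrix

noncomputable section

/-- A run of the (restarted) Anderson-mixing iteration with modified historical
sequences.  `typeII = false` is the Type-I method and `typeII = true` the Type-II
method; `mem k` is the memory size `m_k`; `ζ k`/`Γ k` are the coefficient vectors
(`0`-indexed) used at iteration `k`. -/
structure AMRun (d : ℕ) where
  g : E d → E d
  typeII : Bool
  β : ℕ → ℝ
  mem : ℕ → ℕ
  x : ℕ → E d
  p : ℕ → E d
  q : ℕ → E d
  ζ : ℕ → ℕ → ℝ
  Γ : ℕ → ℕ → ℝ

namespace AMRun

variable {d : ℕ} (S : AMRun d)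

/-- Residual `r_k = g(x_k) - x_k`. -/
def r (k : ℕ) : E d := S.g (S.x k) - S.x k

/-- `v_k = p_k` (Type-I) or `v_k = q_k` (Type-II). -/
def v (k : ℕ) : E d := if S.typeII then S.q k else S.p k

/-- `x̄_k = x_k - P_k Γ_k`. -/
def xbar (k : ℕ) : E d :=
  S.x k - ∑ i ∈ Finset.range (S.mem k), S.Γ k i • S.p (k - S.mem k + 1 + i)

/-- `r̄_k = r_k - Q_k Γ_k`. -/
def rbar (k : ℕ) : E d :=
  S.r k - ∑ i ∈ Finset.range (S.mem k), S.Γ k i • S.q (k - S.mem k + 1 + i)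

/-- The defining relations of the restarted AM method with restart parameters
`m`, `τ`, `η` (conditions (3.5)–(3.7) of the paper are recorded as the invariants
maintained by the restarting checks). -/
structure IsRestarted (m : ℕ) (τ η : ℝ) : Prop where
  mem_zero : S.mem 0 = 0
  mem_succ : ∀ k, S.mem (k + 1) = S.mem k + 1 ∨ S.mem (k + 1) = 0
  mem_le_self : ∀ k, S.mem k ≤ k
  mem_le : ∀ k, S.mem k ≤ m
  res_ctrl : ∀ k, 1 ≤ S.mem k → ‖S.r k‖ ≤ η * ‖S.r (k - S.mem k)‖
  vq_ctrl : ∀ k, 1 ≤ S.mem k →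
    τ * |⟪S.v (k - S.mem k + 1), S.q (k - S.mem k + 1)⟫_ℝ| ≤ |⟪S.v k, S.q k⟫_ℝ|
  pair_one : ∀ k, S.mem k = 1 →
    S.p k = S.x k - S.x (k - 1) ∧ S.q k = S.r k - S.r (k - 1)
  pair_ge_two : ∀ k, 2 ≤ S.mem k →
    S.p k = (S.x k - S.x (k - 1))
        - ∑ i ∈ Finset.range (S.mem k - 1), S.ζ k i • S.p (k - S.mem k + 1 + i) ∧
    S.q k = (S.r k - S.r (k - 1))
        - ∑ i ∈ Finset.range (S.mem k - 1), S.ζ k i • S.q (k - S.mem k + 1 + i) ∧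
    ∀ i < S.mem k - 1, ⟪S.v (k - S.mem k + 1 + i), S.q k⟫_ℝ = 0
  orth : ∀ k, ∀ i < S.mem k, ⟪S.v (k - S.mem k + 1 + i), S.rbar k⟫_ℝ = 0
  update : ∀ k, S.x (k + 1) = S.xbar k + S.β k • S.rbar k

end AMRun

/-- Data of Process II: the same AM scheme applied to the linearized system
`ĥ(x) = h'(x*) (x - x*) = 0`, restarted together with Process I. -/
structure LinRun (d : ℕ) where
  xh : ℕ → E d
  ph : ℕ → E d
  qh : ℕ → E d
  ζh : ℕ → ℕ → ℝ
  Γh : ℕ → ℕ → ℝ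

namespace LinRun

variable {d : ℕ}

/-- Residual of the linearized process: `r̂_k = -A (x̂_k - x*)`. -/
def rh (T : LinRun d) (A : E d →L[ℝ] E d) (xs : E d) (k : ℕ) : E d := -A (T.xh k - xs)

def vh (T : LinRun d) (S : AMRun d) (k : ℕ) : E d := if S.typeII then T.qh k else T.ph k

def xbarh (T : LinRun d) (S : AMRun d) (k : ℕ) : E d :=
  T.xh k - ∑ i ∈ Finset.range (S.mem k), T.Γh k i • T.ph (k - S.mem k + 1 + i)

def rbarh (T : LinRun d) (S : AMRun d) (A : E d →L[ℝ] E d) (xs : E d) (k : ℕ) : E d :=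
  T.rh A xs k - ∑ i ∈ Finset.range (S.mem k), T.Γh k i • T.qh (k - S.mem k + 1 + i)

/-- The defining relations of Process II (Definition 4.3 of the paper). -/
structure IsLinearized (T : LinRun d) (S : AMRun d) (A : E d →L[ℝ] E d) (xs : E d) : Prop where
  reinit : ∀ k, S.mem k = 0 → T.xh k = S.x k
  pair_one : ∀ k, S.mem k = 1 →
    T.ph k = T.xh k - T.xh (k - 1) ∧ T.qh k = T.rh A xs k - T.rh A xs (k - 1)
  pair_ge_two : ∀ k, 2 ≤ S.mem k →
    T.ph k = (T.xh k - T.xh (k - 1))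
        - ∑ i ∈ Finset.range (S.mem k - 1), T.ζh k i • T.ph (k - S.mem k + 1 + i) ∧
    T.qh k = (T.rh A xs k - T.rh A xs (k - 1))
        - ∑ i ∈ Finset.range (S.mem k - 1), T.ζh k i • T.qh (k - S.mem k + 1 + i) ∧
    ∀ i < S.mem k - 1, ⟪T.vh S (k - S.mem k + 1 + i), T.qh k⟫_ℝ = 0
  orth : ∀ k, ∀ i < S.mem k, ⟪T.vh S (k - S.mem k + 1 + i), T.rbarh S A xs k⟫_ℝ = 0
  update : ∀ k, T.xh (k + 1) = T.xbarh S k + S.β k • T.rbarh S A xs k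

end LinRun

/-- Assumption H of the paper, together with the quantitative constants
`ρ̂ = ρ`, `κ̂ = κh`, `μ`, `L` appearing in (4.4)–(4.6). -/
structure AssumptionH (d : ℕ) (g : E d → E d) (xs : E d)
    (Dh : E d → (E d →L[ℝ] E d)) (ρ κh μ L : ℝ) : Prop where
  ρ_pos : 0 < ρ
  κ_pos : 0 < κh
  μ_pos : 0 < μ
  L_pos : 0 < L
  fixed : g xs = xs
  deriv : ∀ x ∈ Metric.closedBall xs ρ, HasFDerivAt (fun y => y - g y) (Dh x) x
  norm_lower : ∀ x ∈ Metric.closedBall xs ρ, ∀ y : E d, μ * ‖y‖ ≤ ‖Dh x y‖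
  norm_upper : ∀ x ∈ Metric.closedBall xs ρ, ∀ y : E d, ‖Dh x y‖ ≤ L * ‖y‖
  inner_lower : ∀ x ∈ Metric.closedBall xs ρ, ∀ y : E d, μ * ‖y‖ ^ 2 ≤ ⟪y, Dh x y⟫_ℝ
  inner_upper : ∀ x ∈ Metric.closedBall xs ρ, ∀ y : E d, ⟪y, Dh x y⟫_ℝ ≤ L * ‖y‖ ^ 2
  taylor : ∀ x ∈ Metric.closedBall xs ρ,
    ‖(x - g x) - Dh xs (x - xs)‖ ≤ κh / 2 * ‖x - xs‖ ^ 2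


/-- The entries of the (unreduced) upper-Hessenberg matrix of Definition 5.1,
built column by column from the AM coefficients along a window starting at the
restart index `k0`.  Column `j` (`j < n`) corresponds to iteration
`t = k0 + 1 + j`, where the memory size is `m_t = j + 1`; `Hs i j` is the
`(i, j)` entry (`0`-indexed).  The equations below transcribe
`h_t^{(m_t+1)} = -1/(β_t (1 - Γ_t^{(m_t)}))`, the `m_t = 1` formula
`h_t = (1/(1-Γ_t))(1/β_{t-1} - φ_t/β_t)` and the `m_t ≥ 2` formula
`h_t = (1/(1-Γ_t^{(m_t)}))((1/β_{t-1})(φ_{t-1}ᵀ,1)ᵀ - (1/β_t)φ_t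
        - H̄_{t-1}(φ_{t-1} - Γ_t^{[m_t-1]}))`, with `φ_t = Γ_t + ζ_{t+1}`. -/
def IsHess (β : ℕ → ℝ) (ζ Γ : ℕ → ℕ → ℝ) (k0 n : ℕ) (Hs : ℕ → ℕ → ℝ) : Prop :=
  ∀ j < n,
    (∀ i, j + 1 < i → Hs i j = 0) ∧
    Hs (j + 1) j = -(1 / (β (k0 + 1 + j) * (1 - Γ (k0 + 1 + j) j))) ∧
    (j = 0 → Hs 0 0 = (1 / (1 - Γ (k0 + 1) 0)) *
        (1 / β k0 - (Γ (k0 + 1) 0 + ζ (k0 + 2) 0) / β (k0 + 1))) ∧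
    (1 ≤ j → ∀ i ≤ j, Hs i j = (1 / (1 - Γ (k0 + 1 + j) j)) *
        ((1 / β (k0 + j)) * (if i < j then Γ (k0 + j) i + ζ (k0 + j + 1) i else 1)
          - (Γ (k0 + 1 + j) i + ζ (k0 + 2 + j) i) / β (k0 + 1 + j)
          - ∑ l ∈ Finset.range j,
              Hs i l * ((Γ (k0 + j) l + ζ (k0 + j + 1) l) - Γ (k0 + 1 + j) l)))

/-!
For `g(x) = x - A x + b` every residual difference is the image of an iterate difference,
`q_i = -A p_i`, and `r̄_t = b - A x̄_t`. Along a restart window the mixing step gives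
`β_t r̄_t = p_{t+1} + ∑ φ_t^{(i)} p_i` and
`r̄_{t+1} = r̄_t + (1 - Γ_{t+1}^{(m)}) q_{t+1} + ∑ (φ_t^{(i)} - Γ_{t+1}^{(i)}) q_i`.
Pairing the latter with the `v_i` and using the orthogonality conditions gives a triangular
system with diagonal `⟪v_i, q_i⟫`; so, by induction along the window, all `⟪v_i, q_i⟫ ≠ 0`,
the coefficients `φ_t^{(i)} - Γ_{t+1}^{(i)}` vanish, and
`(1 - Γ_{t+1}^{(m)}) ⟪v_{t+1}, q_{t+1}⟫ = -⟪v_{t+1}, r̄_t⟫`. The right side is nonzero because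
it equals `-β_t ‖r̄_t‖²` (Type I) or `β_t ⟪A r̄_t, r̄_t⟫` (Type II), and `r̄_t ≠ 0` as long as
the solution has not been reached. Finally `(1 - Γ_{t+1}^{(m)}) A p_{t+1} = r̄_t - r̄_{t+1}`, and
expanding both `r̄`'s in the `p`'s yields the columns of the Hessenberg matrix.
-/

theorem eq_zero_of_lowerTriangular {R : Type*} [Semiring R] [NoZeroDivisors R] {n : ℕ}
    {B : ℕ → ℕ → R} {c : ℕ → R} (hB : ∀ j < n, ∀ i < j, B i j = 0)
    (hdiag : ∀ i < n, B i i ≠ 0) (h : ∀ i < n, ∑ j ∈ range n, c j * B i j = 0) :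
    ∀ i < n, c i = 0 := by
  intro i
  induction i using Nat.strong_induction_on with
  | _ i ih =>
    intro hi
    have hsum : ∑ j ∈ range n, c j * B i j = c i * B i i :=
      sum_eq_single_of_mem i (mem_range.2 hi) fun j hj hji => by
        rcases lt_or_gt_of_ne hji with hlt | hgt
        · rw [ih j hlt (hlt.trans hi), zero_mul]
        · rw [hB j (mem_range.1 hj) i hgt, mul_zero]
    exact (mul_eq_zero.1 (hsum ▸ h i hi)).resolve_right (hdiag i hi)

namespace AMRun

variable {d : ℕ} {S : AMRun d} {m : ℕ} {τ η : ℝ}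

def φ (S : AMRun d) (t i : ℕ) : ℝ := S.Γ t i + S.ζ (t + 1) i

theorem IsRestarted.mem_sub (hrun : S.IsRestarted m τ η) (k : ℕ) {j : ℕ}
    (hj : j ≤ S.mem k) : S.mem (k - j) = S.mem k - j := by
  induction j with
  | zero => rfl
  | succ j ih =>
    have h := ih (by omega)
    have hk := hrun.mem_le_self k
    have hsplit : k - j = k - (j + 1) + 1 := by omega
    rcases hrun.mem_succ (k - (j + 1)) with h' | h' <;> rw [← hsplit] at h' <;> omega

theorem IsRestarted.mem_window (hrun : S.IsRestarted m τ η) (k : ℕ) {s : ℕ}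
    (hs : s ≤ S.mem k) : S.mem (k - S.mem k + s) = s := by
  have h := hrun.mem_sub k (Nat.sub_le (S.mem k) s)
  have hk := hrun.mem_le_self k
  rwa [show k - (S.mem k - s) = k - S.mem k + s by omega, Nat.sub_sub_self hs] at h

section Window

variable {k0 n : ℕ}

theorem mem_window_succ (hwin : ∀ s ≤ n, S.mem (k0 + s) = s) {u : ℕ} (hu : u < n) :
    S.mem (k0 + 1 + u) = u + 1 := by
  rw [Nat.add_right_comm]
  exact hwin (u + 1) hu

theorem rbar_window (hwin : ∀ s ≤ n, S.mem (k0 + s) = s) {s : ℕ} (hs : s ≤ n) :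
    S.rbar (k0 + s) = S.r (k0 + s) - ∑ i ∈ range s, S.Γ (k0 + s) i • S.q (k0 + 1 + i) := by
  rw [rbar, hwin s hs, Nat.add_sub_cancel]

theorem xbar_window (hwin : ∀ s ≤ n, S.mem (k0 + s) = s) {s : ℕ} (hs : s ≤ n) :
    S.xbar (k0 + s) = S.x (k0 + s) - ∑ i ∈ range s, S.Γ (k0 + s) i • S.p (k0 + 1 + i) := by
  rw [xbar, hwin s hs, Nat.add_sub_cancel]

theorem IsRestarted.inner_v_rbar_window (hrun : S.IsRestarted m τ η)
    (hwin : ∀ s ≤ n, S.mem (k0 + s) = s) {s i : ℕ} (hs : s ≤ n) (hi : i < s) :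
    ⟪S.v (k0 + 1 + i), S.rbar (k0 + s)⟫_ℝ = 0 := by
  have h := hrun.orth (k0 + s) i (by rwa [hwin s hs])
  rwa [hwin s hs, Nat.add_sub_cancel] at h

theorem IsRestarted.inner_v_rbar_succ_window (hrun : S.IsRestarted m τ η)
    (hwin : ∀ s ≤ n, S.mem (k0 + s) = s) {u i : ℕ} (hu : u < n) (hi : i ≤ u) :
    ⟪S.v (k0 + 1 + i), S.rbar (k0 + 1 + u)⟫_ℝ = 0 := by
  have h := hrun.inner_v_rbar_window hwin (s := u + 1) hu (Nat.lt_succ_of_le hi)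
  rwa [show k0 + (u + 1) = k0 + 1 + u by omega] at h

theorem IsRestarted.inner_v_q_window (hrun : S.IsRestarted m τ η)
    (hwin : ∀ s ≤ n, S.mem (k0 + s) = s) {u i : ℕ} (hu : u < n) (hi : i < u) :
    ⟪S.v (k0 + 1 + i), S.q (k0 + 1 + u)⟫_ℝ = 0 := by
  have hm := mem_window_succ hwin hu
  have h := (hrun.pair_ge_two (k0 + 1 + u) (by omega)).2.2 i (by omega)
  rwa [hm, show k0 + 1 + u - (u + 1) = k0 by omega] at h

theorem IsRestarted.pair_window (hrun : S.IsRestarted m τ η)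
    (hwin : ∀ s ≤ n, S.mem (k0 + s) = s) {u : ℕ} (hu : u < n) :
    S.p (k0 + 1 + u) = (S.x (k0 + 1 + u) - S.x (k0 + u))
        - ∑ i ∈ range u, S.ζ (k0 + 1 + u) i • S.p (k0 + 1 + i) ∧
    S.q (k0 + 1 + u) = (S.r (k0 + 1 + u) - S.r (k0 + u))
        - ∑ i ∈ range u, S.ζ (k0 + 1 + u) i • S.q (k0 + 1 + i) := by
  have hm := mem_window_succ hwin hu
  have hprev : k0 + 1 + u - 1 = k0 + u := by omega
  rcases Nat.eq_zero_or_pos u with rfl | hu0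
  · simpa [hprev] using hrun.pair_one (k0 + 1 + 0) hm
  · obtain ⟨hp, hq, -⟩ := hrun.pair_ge_two (k0 + 1 + u) (by omega)
    rw [hm, Nat.add_sub_cancel, show k0 + 1 + u - (u + 1) = k0 by omega, hprev] at hp hq
    exact ⟨hp, hq⟩

theorem IsRestarted.smul_rbar_window (hrun : S.IsRestarted m τ η)
    (hwin : ∀ s ≤ n, S.mem (k0 + s) = s) {u : ℕ} (hu : u < n) :
    S.β (k0 + u) • S.rbar (k0 + u) =
      S.p (k0 + 1 + u) + ∑ i ∈ range u, S.φ (k0 + u) i • S.p (k0 + 1 + i) := by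
  have hx : S.x (k0 + 1 + u) = S.xbar (k0 + u) + S.β (k0 + u) • S.rbar (k0 + u) := by
    rw [Nat.add_right_comm]
    exact hrun.update (k0 + u)
  rw [(hrun.pair_window hwin hu).1, hx, xbar_window hwin hu.le]
  simp only [φ, add_smul, sum_add_distrib, Nat.add_right_comm k0 u 1]
  abel

theorem IsRestarted.r_sub_rbar_window (hrun : S.IsRestarted m τ η)
    (hwin : ∀ s ≤ n, S.mem (k0 + s) = s) {u : ℕ} (hu : u < n) :
    S.r (k0 + 1 + u) - S.rbar (k0 + u) =
      S.q (k0 + 1 + u) + ∑ i ∈ range u, S.φ (k0 + u) i • S.q (k0 + 1 + i) := by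
  rw [(hrun.pair_window hwin hu).2, rbar_window hwin hu.le]
  simp only [φ, add_smul, sum_add_distrib, Nat.add_right_comm k0 u 1]
  abel

theorem IsRestarted.rbar_succ_window (hrun : S.IsRestarted m τ η)
    (hwin : ∀ s ≤ n, S.mem (k0 + s) = s) {u : ℕ} (hu : u < n) :
    S.rbar (k0 + 1 + u) = S.rbar (k0 + u) + (1 - S.Γ (k0 + 1 + u) u) • S.q (k0 + 1 + u)
      + ∑ i ∈ range u, (S.φ (k0 + u) i - S.Γ (k0 + 1 + u) i) • S.q (k0 + 1 + i) := by
  have h := rbar_window hwin (s := u + 1) hu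
  have hr := hrun.r_sub_rbar_window hwin hu
  rw [show k0 + (u + 1) = k0 + 1 + u by omega] at h
  rw [sub_eq_iff_eq_add'] at hr
  rw [h, hr, sum_range_succ]
  simp only [sub_smul, one_smul, sum_sub_distrib]
  abel

theorem IsRestarted.φ_window_eq_Γ (hrun : S.IsRestarted m τ η)
    (hwin : ∀ s ≤ n, S.mem (k0 + s) = s) {u : ℕ} (hu : u < n)
    (hdiag : ∀ i < u, ⟪S.v (k0 + 1 + i), S.q (k0 + 1 + i)⟫_ℝ ≠ 0) :
    ∀ i < u, S.φ (k0 + u) i = S.Γ (k0 + 1 + u) i := by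
  have hzero := eq_zero_of_lowerTriangular (c := fun i => S.φ (k0 + u) i - S.Γ (k0 + 1 + u) i)
    (fun j hj i hi => hrun.inner_v_q_window hwin (hj.trans hu) hi) hdiag fun i hi => by
      have h0 := hrun.inner_v_rbar_succ_window hwin hu hi.le
      rw [hrun.rbar_succ_window hwin hu, inner_add_right, inner_add_right,
        real_inner_smul_right, hrun.inner_v_rbar_window hwin hu.le hi,
        hrun.inner_v_q_window hwin hu hi, inner_sum, mul_zero, add_zero, zero_add] at h0
      simpa only [real_inner_smul_right] using h0
  exact fun i hi => sub_eq_zero.1 (hzero i hi)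

theorem IsRestarted.one_sub_Γ_mul_inner_v_q_window (hrun : S.IsRestarted m τ η)
    (hwin : ∀ s ≤ n, S.mem (k0 + s) = s) {u : ℕ} (hu : u < n)
    (hφ : ∀ i < u, S.φ (k0 + u) i = S.Γ (k0 + 1 + u) i) :
    (1 - S.Γ (k0 + 1 + u) u) * ⟪S.v (k0 + 1 + u), S.q (k0 + 1 + u)⟫_ℝ =
      -⟪S.v (k0 + 1 + u), S.rbar (k0 + u)⟫_ℝ := by
  have h0 := hrun.inner_v_rbar_succ_window hwin hu le_rfl
  rw [hrun.rbar_succ_window hwin hu, inner_add_right, inner_add_right, real_inner_smul_right,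
    inner_sum, sum_eq_zero fun i hi => by
      rw [hφ i (mem_range.1 hi), sub_self, zero_smul, inner_zero_right], add_zero] at h0
  linarith

variable {L : E d →ₗ[ℝ] E d} {b : E d}

theorem r_eq_of_g_eq (hg : S.g = fun u => u - L u + b) (t : ℕ) : S.r t = b - L (S.x t) := by
  simp only [r, hg]
  abel

theorem IsRestarted.q_window_eq_neg (hrun : S.IsRestarted m τ η)
    (hwin : ∀ s ≤ n, S.mem (k0 + s) = s) (hg : S.g = fun u => u - L u + b) {u : ℕ}
    (hu : u < n) : S.q (k0 + 1 + u) = -L (S.p (k0 + 1 + u)) := by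
  induction u using Nat.strong_induction_on with
  | _ u ih =>
    obtain ⟨hp, hq⟩ := hrun.pair_window hwin hu
    have hsum : ∑ i ∈ range u, S.ζ (k0 + 1 + u) i • S.q (k0 + 1 + i) =
        -L (∑ i ∈ range u, S.ζ (k0 + 1 + u) i • S.p (k0 + 1 + i)) := by
      rw [map_sum, ← sum_neg_distrib]
      refine sum_congr rfl fun i hi => ?_
      rw [ih i (mem_range.1 hi) ((mem_range.1 hi).trans hu), map_smul, smul_neg]
    rw [hq, hsum, hp, r_eq_of_g_eq hg, r_eq_of_g_eq hg, map_sub, map_sub]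
    abel

theorem IsRestarted.r_succ_window (hrun : S.IsRestarted m τ η)
    (hwin : ∀ s ≤ n, S.mem (k0 + s) = s) (hg : S.g = fun u => u - L u + b) {u : ℕ}
    (hu : u < n) :
    S.r (k0 + 1 + u) = S.rbar (k0 + u) - S.β (k0 + u) • L (S.rbar (k0 + u)) := by
  have hq : ∀ i ≤ u, S.q (k0 + 1 + i) = -L (S.p (k0 + 1 + i)) :=
    fun i hi => hrun.q_window_eq_neg hwin hg (hi.trans_lt hu)
  have hr := hrun.r_sub_rbar_window hwin hu
  rw [sub_eq_iff_eq_add'] at hr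
  rw [← map_smul, hrun.smul_rbar_window hwin hu, hr, hq u le_rfl,
    sum_congr rfl fun i hi => by rw [hq i (mem_range.1 hi).le]]
  simp only [map_add, map_sum, map_smul, smul_neg, sum_neg_distrib]
  abel

theorem IsRestarted.rbar_window_ne_zero (hrun : S.IsRestarted m τ η)
    (hwin : ∀ s ≤ n, S.mem (k0 + s) = s) (hg : S.g = fun u => u - L u + b) {u : ℕ}
    (hu : u < n) (hne : S.r (k0 + 1 + u) ≠ 0) : S.rbar (k0 + u) ≠ 0 := by
  intro h0
  exact hne (by rw [hrun.r_succ_window hwin hg hu, h0, map_zero, smul_zero, sub_zero])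

theorem IsRestarted.inner_v_rbar_window_ne_zero (hrun : S.IsRestarted m τ η)
    (hwin : ∀ s ≤ n, S.mem (k0 + s) = s) (hg : S.g = fun u => u - L u + b)
    (hpd : ∀ y : E d, y ≠ 0 → 0 < ⟪y, L y⟫_ℝ) {u : ℕ} (hu : u < n)
    (hβ : 0 < S.β (k0 + u)) (hne : S.r (k0 + 1 + u) ≠ 0) :
    ⟪S.v (k0 + 1 + u), S.rbar (k0 + u)⟫_ℝ ≠ 0 := by
  have hr := hrun.rbar_window_ne_zero hwin hg hu hne
  have hcomb : ⟪S.v (k0 + 1 + u), S.rbar (k0 + u)⟫_ℝ =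
      ⟪S.v (k0 + 1 + u) + ∑ i ∈ range u, S.φ (k0 + u) i • S.v (k0 + 1 + i),
        S.rbar (k0 + u)⟫_ℝ := by
    rw [inner_add_left, sum_inner, sum_eq_zero fun i hi => ?_, add_zero]
    rw [real_inner_smul_left, hrun.inner_v_rbar_window hwin hu.le (mem_range.1 hi), mul_zero]
  rw [hcomb]
  cases hT : S.typeII
  · simp only [v, hT, Bool.false_eq_true, if_false]
    rw [← hrun.smul_rbar_window hwin hu, real_inner_smul_left, real_inner_self_eq_norm_sq]
    exact (mul_pos hβ (pow_pos (norm_pos_iff.2 hr) 2)).ne'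
  · simp only [v, hT, if_true]
    rw [← hrun.r_sub_rbar_window hwin hu, hrun.r_succ_window hwin hg hu, sub_sub_cancel_left,
      inner_neg_left, real_inner_smul_left, real_inner_comm]
    exact neg_ne_zero.2 (mul_pos hβ (hpd _ hr)).ne'

theorem IsRestarted.one_sub_Γ_mul_inner_v_q_window_ne_zero (hrun : S.IsRestarted m τ η)
    (hwin : ∀ s ≤ n, S.mem (k0 + s) = s) (hg : S.g = fun u => u - L u + b)
    (hpd : ∀ y : E d, y ≠ 0 → 0 < ⟪y, L y⟫_ℝ) (hβ : ∀ t, 0 < S.β t)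
    (hne : ∀ u < n, S.r (k0 + 1 + u) ≠ 0) :
    ∀ u < n, (1 - S.Γ (k0 + 1 + u) u) * ⟪S.v (k0 + 1 + u), S.q (k0 + 1 + u)⟫_ℝ ≠ 0 := by
  intro u
  induction u using Nat.strong_induction_on with
  | _ u ih =>
    intro hu
    have hφ := hrun.φ_window_eq_Γ hwin hu fun i hi => right_ne_zero_of_mul (ih i hi (hi.trans hu))
    rw [hrun.one_sub_Γ_mul_inner_v_q_window hwin hu hφ, neg_ne_zero]
    exact hrun.inner_v_rbar_window_ne_zero hwin hg hpd hu (hβ _) (hne u hu)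

/-- The coordinates of `β_{k0+s} r̄_{k0+s}` along `p_{k0+1}, p_{k0+2}, …`. -/
def rbarCoord (S : AMRun d) (k0 s i : ℕ) : ℝ :=
  if i < s then S.φ (k0 + s) i else if i = s then 1 else 0

theorem IsRestarted.smul_rbar_window_eq_sum (hrun : S.IsRestarted m τ η)
    (hwin : ∀ s ≤ n, S.mem (k0 + s) = s) {s N : ℕ} (hs : s < n) (hsN : s < N) :
    S.β (k0 + s) • S.rbar (k0 + s) = ∑ i ∈ range N, S.rbarCoord k0 s i • S.p (k0 + 1 + i) := by
  have htrunc : ∑ i ∈ range (s + 1), S.rbarCoord k0 s i • S.p (k0 + 1 + i) =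
      ∑ i ∈ range N, S.rbarCoord k0 s i • S.p (k0 + 1 + i) :=
    sum_subset (range_subset_range.2 hsN) fun i _ hi => by
      rw [mem_range] at hi
      rw [rbarCoord, if_neg (by omega), if_neg (by omega), zero_smul]
  rw [hrun.smul_rbar_window hwin hs, ← htrunc, sum_range_succ, add_comm (S.p _)]
  congr 1
  · exact sum_congr rfl fun i hi => by rw [rbarCoord, if_pos (mem_range.1 hi)]
  · simp [rbarCoord]

theorem _root_.IsHess.apply_eq {k0 N j : ℕ} {Hs : ℕ → ℕ → ℝ} (hHs : IsHess S.β S.ζ S.Γ k0 N Hs)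
    (hj : j < N) (hφ : ∀ i < j, S.φ (k0 + j) i = S.Γ (k0 + 1 + j) i) (i : ℕ) :
    Hs i j = (1 - S.Γ (k0 + 1 + j) j)⁻¹ *
      (S.rbarCoord k0 j i / S.β (k0 + j) - S.rbarCoord k0 (j + 1) i / S.β (k0 + 1 + j)) := by
  obtain ⟨hzero, hsub, hfirst, hcol⟩ := hHs j hj
  have e1 : k0 + (j + 1) = k0 + 1 + j := by omega
  have e2 : k0 + 1 + j + 1 = k0 + 2 + j := by omega
  rcases lt_trichotomy i (j + 1) with hi | rfl | hi
  · rcases Nat.eq_zero_or_pos j with rfl | hj0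
    · obtain rfl : i = 0 := by omega
      rw [hfirst rfl]
      simp [rbarCoord, φ]
    · have hsum : ∑ l ∈ range j,
          Hs i l * ((S.Γ (k0 + j) l + S.ζ (k0 + j + 1) l) - S.Γ (k0 + 1 + j) l) = 0 :=
        sum_eq_zero fun l hl => by
          rw [show S.Γ (k0 + j) l + S.ζ (k0 + j + 1) l = S.Γ (k0 + 1 + j) l from
            hφ l (mem_range.1 hl), sub_self, mul_zero]
      rw [hcol hj0 i (by omega), hsum]
      simp only [rbarCoord, φ, e1, e2, if_pos hi]
      split_ifs <;> first | omega | ring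
  · rw [hsub]
    simp [rbarCoord]
  · rw [hzero i hi]
    simp [rbarCoord, show ¬i < j by omega, show i ≠ j by omega, show ¬i < j + 1 by omega,
      show i ≠ j + 1 by omega]

theorem IsRestarted.map_p_window_eq_sum (hrun : S.IsRestarted m τ η)
    (hwin : ∀ s ≤ n, S.mem (k0 + s) = s) (hg : S.g = fun u => u - L u + b)
    {N : ℕ} {Hs : ℕ → ℕ → ℝ} (hHs : IsHess S.β S.ζ S.Γ k0 N Hs) (hN : N < n)
    (hβ : ∀ t, S.β t ≠ 0) {j : ℕ} (hj : j < N)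
    (hφ : ∀ i < j, S.φ (k0 + j) i = S.Γ (k0 + 1 + j) i) (hΓ : 1 - S.Γ (k0 + 1 + j) j ≠ 0) :
    L (S.p (k0 + 1 + j)) = ∑ i ∈ range (N + 1), Hs i j • S.p (k0 + 1 + i) := by
  have hstep : (1 - S.Γ (k0 + 1 + j) j) • L (S.p (k0 + 1 + j)) =
      S.rbar (k0 + j) - S.rbar (k0 + 1 + j) := by
    rw [hrun.rbar_succ_window hwin (hj.trans hN), hrun.q_window_eq_neg hwin hg (hj.trans hN),
      sum_eq_zero fun i hi => by rw [hφ i (mem_range.1 hi), sub_self, zero_smul]]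
    module
  have hcur := hrun.smul_rbar_window_eq_sum hwin (hj.trans hN) (N := N + 1) (by omega)
  have hnext := hrun.smul_rbar_window_eq_sum hwin (s := j + 1) (N := N + 1) (by omega)
    (by omega)
  rw [show k0 + (j + 1) = k0 + 1 + j by omega] at hnext
  have hterm : ∀ i, Hs i j • S.p (k0 + 1 + i) = (1 - S.Γ (k0 + 1 + j) j)⁻¹ •
      ((S.β (k0 + j))⁻¹ • (S.rbarCoord k0 j i • S.p (k0 + 1 + i)) -
        (S.β (k0 + 1 + j))⁻¹ • (S.rbarCoord k0 (j + 1) i • S.p (k0 + 1 + i))) := fun i => by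
    rw [hHs.apply_eq hj hφ i]
    module
  rw [sum_congr rfl fun i _ => hterm i, ← smul_sum, sum_sub_distrib, ← smul_sum, ← smul_sum,
    ← hcur, ← hnext, inv_smul_smul₀ (hβ _), inv_smul_smul₀ (hβ _), ← hstep,
    inv_smul_smul₀ hΓ]

end Window

end AMRun

theorem stmt_9_general {d : ℕ} (A : Matrix (Fin d) (Fin d) ℝ) (b : E d)
    (hpd : ∀ y : E d, y ≠ 0 → 0 < ⟪y, mvE A y⟫_ℝ)
    (m : ℕ) (τ η : ℝ)
    (S : AMRun d) (hg : S.g = fun u => u - mvE A u + b)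
    (hβpos : ∀ j, 0 < S.β j)
    (hrun : S.IsRestarted m τ η)
    (k : ℕ) (hmem : 2 ≤ S.mem (k + 1))
    (hne : ∀ j ≤ k + 1, S.r j ≠ 0) :
    1 - S.Γ k (S.mem k - 1) ≠ 0 ∧
    ∀ Hs : ℕ → ℕ → ℝ, IsHess S.β S.ζ S.Γ (k - S.mem k) (S.mem k) Hs →
      (∀ j < S.mem k,
        mvE A (S.p (k - S.mem k + 1 + j)) =
          ∑ i ∈ Finset.range (S.mem k + 1), Hs i j • S.p (k - S.mem k + 1 + i)) ∧
      (∀ j < S.mem k,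
        mvE A (S.p (k - S.mem k + 1 + j)) =
          (∑ i ∈ Finset.range (S.mem k), Hs i j • S.p (k - S.mem k + 1 + i)) +
            (if j + 1 = S.mem k then Hs (S.mem k) j else 0) • S.p (k + 1)) := by
  set M := S.mem k
  have hMk : M ≤ k := hrun.mem_le_self k
  have hsucc : S.mem (k + 1) = M + 1 := (hrun.mem_succ k).resolve_right (by omega)
  have hwin : ∀ s ≤ M + 1, S.mem (k - M + s) = s := fun s hs => by
    simpa [hsucc] using hrun.mem_window (k + 1) (s := s) (by omega)
  have hg' : S.g = fun u => u - Matrix.toEuclideanLin A u + b := hg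
  have hnd := hrun.one_sub_Γ_mul_inner_v_q_window_ne_zero hwin hg' hpd hβpos
    fun u hu => hne _ (by omega)
  have hφ : ∀ j < M, ∀ i < j, S.φ (k - M + j) i = S.Γ (k - M + 1 + j) i := fun j hj =>
    hrun.φ_window_eq_Γ hwin (by omega) fun i hi => right_ne_zero_of_mul (hnd i (by omega))
  have hΓ : ∀ j < M, 1 - S.Γ (k - M + 1 + j) j ≠ 0 := fun j hj =>
    left_ne_zero_of_mul (hnd j (by omega))
  refine ⟨by simpa [show k - M + 1 + (M - 1) = k by omega] using hΓ (M - 1) (by omega),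
    fun Hs hHs => ?_⟩
  have hcol : ∀ j < M, mvE A (S.p (k - M + 1 + j)) =
      ∑ i ∈ range (M + 1), Hs i j • S.p (k - M + 1 + i) := fun j hj =>
    hrun.map_p_window_eq_sum hwin hg' hHs M.lt_succ_self (fun t => (hβpos t).ne') hj
      (hφ j hj) (hΓ j hj)
  refine ⟨hcol, fun j hj => ?_⟩
  rw [hcol j hj, sum_range_succ, show k - M + 1 + M = k + 1 by omega]
  split_ifs with hlast
  · rfl
  · rw [(hHs j hj).1 M (by omega)]

/-- Proposition 5.2 of the paper.  For the restarted
Type-I/Type-II AM applied to the linear fixed-point problem `g(x) = (I-A)x + b`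
with `A` positive definite, if `m_{k+1} ≥ 2` at iteration `k+1` and the exact
solution has not been reached, then `1 - Γ_k^{(m_k)} ≠ 0` (so the Hessenberg
construction of Definition 5.1 is well defined), and
`A P_k = P_{k+1} H̄_k = P_k H_k + p_{k+1} · h_k^{(m_k+1)} e_{m_k}ᵀ`
(stated column by column). -/
theorem stmt_9 {d : ℕ} (A : Matrix (Fin d) (Fin d) ℝ) (b : E d)
    (hpd : ∀ y : E d, y ≠ 0 → 0 < ⟪y, mvE A y⟫_ℝ)
    (m : ℕ) (hm : 1 ≤ m) (τ η : ℝ) (hτ0 : 0 < τ) (hτ1 : τ < 1) (hη : 0 < η)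
    (S : AMRun d) (hg : S.g = fun u => u - mvE A u + b)
    (hβpos : ∀ j, 0 < S.β j)
    (hrun : S.IsRestarted m τ η)
    (k : ℕ) (hmem : 2 ≤ S.mem (k + 1))
    (hne : ∀ j ≤ k + 1, S.r j ≠ 0) :
    1 - S.Γ k (S.mem k - 1) ≠ 0 ∧
    ∀ Hs : ℕ → ℕ → ℝ, IsHess S.β S.ζ S.Γ (k - S.mem k) (S.mem k) Hs →
      (∀ j < S.mem k,
        mvE A (S.p (k - S.mem k + 1 + j)) =
          ∑ i ∈ Finset.range (S.mem k + 1), Hs i j • S.p (k - S.mem k + 1 + i)) ∧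
      (∀ j < S.mem k,
        mvE A (S.p (k - S.mem k + 1 + j)) =
          (∑ i ∈ Finset.range (S.mem k), Hs i j • S.p (k - S.mem k + 1 + i)) +
            (if j + 1 = S.mem k then Hs (S.mem k) j else 0) • S.p (k + 1)) :=
  stmt_9_general A b hpd m τ η S hg hβpos hrun k hmem hne

end
end

section
/- Let g(x) = (I−A)x + b in the fixed-point problem x = g(x), where A ∈ ℝ^{d×d} is symmetric positive definite and b ∈ ℝ^d. For the restarted Type-I/Type-II ST-AM, if m_{k+1} ≥ 2 at the (k+1)-th iteration, then Ap_k = t_k^{(m_k−1)}p_{k−1} + t_k^{(m_k)}p_k + t_k^{(m_k+1)}p_{k+1}, where p_{k−m_k} := 0 ∈ ℝ^d and the coefficients are t_k^{(m_k−1)} = φ_{k−1}/(β_{k−1}(1 − Γ_k^{(m_k)})), t_k^{(m_k)} = (1/(1 − Γ_k^{(m_k)}))(1/β_{k−1} − φ_k/β_k), t_k^{(m_k+1)} = −1/(β_k(1 − Γ_k^{(m_k)})), with φ_k := 0 if m_k = 0 and φ_k := Γ_k^{(m_k)} + ζ_{k+1}^{(m_k)} = Γ_{k+1}^{(m_k)}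 = (v_kᵀr_{k+1})/(v_kᵀq_k) if m_k ≥ 1. Consequently there is a tridiagonal matrix T̄_k ∈ ℝ^{(m_k+1)×m_k} such that AP_k = P_{k+1}T̄_k = P_kT_k + p_{k+1}·t_k^{(m_k+1)}e_{m_k}ᵀ, where T_k is obtained from T̄_k by deleting its last row and e_{m_k} is the m_k-th standard basis vector. -/
/-!
For `g(x) = (I - A)x + b` one has `q_j = -A p_j`, so inside a restart cycle ST-AM behaves like a
Lanczos process. By induction along the cycle, `r̄_t` is orthogonal to every `v_i` of the cycle
and `q_t` to every earlier one: the short-term conditions propagate to the whole cycle because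
`A` is symmetric and `A v_i ∈ span {v_{i-1}, v_i, v_{i+1}}`. This orthogonality gives
`Γ_t^{(m_t-1)} = φ_{t-1}` and kills the `p_{t-2}` term of `p_t`, so that
`p_t = β_{t-1} r̄_{t-1} - φ_{t-1} p_{t-1}` and `(1 - Γ_t^{(m_t)}) A p_t = r̄_{t-1} - r̄_t`;
eliminating `r̄` yields the three-term recurrence. Since `r_t ≠ 0` and `A` is positive definite,
`v_tᵀ r̄_{t-1} ≠ 0`, which keeps `1 - Γ_t^{(m_t)}` and `v_tᵀ q_t` away from zero.
-/

open scoped InnerProductSpace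
open Finset Matrix

noncomputable section

/-- A run of the (restarted) short-term recurrence Anderson mixing (ST-AM).
`typeII = false` is the Type-I method and `typeII = true` the Type-II method;
`mem k` is the memory size `m_k`.  At iteration `k`, `ζ k 0`/`ζ k 1` are the
coefficients of `p_{k-2}`/`p_{k-1}` in the modified vector pair and
`Γ k 0`/`Γ k 1` the coefficients of `p_{k-1}`/`p_k` in the update; in the
paper's `1`-based notation `Γ_k^{(m_k)} = Γ k 1`, `Γ_k^{(m_k-1)} = Γ k 0`,
`ζ_{k+1}^{(m_k)} = ζ (k+1) 1`. -/
structure STRun (d : ℕ) where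
  g : E d → E d
  typeII : Bool
  β : ℕ → ℝ
  mem : ℕ → ℕ
  x : ℕ → E d
  p : ℕ → E d
  q : ℕ → E d
  ζ : ℕ → ℕ → ℝ
  Γ : ℕ → ℕ → ℝ

namespace STRun

variable {d : ℕ} (S : STRun d)

/-- Residual `r_k = g(x_k) - x_k`. -/
def r (k : ℕ) : E d := S.g (S.x k) - S.x k

/-- `v_k = p_k` (Type-I) or `v_k = q_k` (Type-II). -/
def v (k : ℕ) : E d := if S.typeII then S.q k else S.p k

/-- `x̄_k = x_k - (p_{k-1}, p_k) Γ_k` (only existing pairs are used). -/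
def xbar (k : ℕ) : E d :=
  S.x k - (if 2 ≤ S.mem k then S.Γ k 0 • S.p (k - 1) else 0)
        - (if 1 ≤ S.mem k then S.Γ k 1 • S.p k else 0)

/-- `r̄_k = r_k - (q_{k-1}, q_k) Γ_k` (only existing pairs are used). -/
def rbar (k : ℕ) : E d :=
  S.r k - (if 2 ≤ S.mem k then S.Γ k 0 • S.q (k - 1) else 0)
        - (if 1 ≤ S.mem k then S.Γ k 1 • S.q k else 0)

/-- The defining relations of the restarted ST-AM with restart parameters
`m`, `τ`, `η`. -/
structure IsRestarted (m : ℕ) (τ η : ℝ) : Prop where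
  mem_zero : S.mem 0 = 0
  mem_succ : ∀ k, S.mem (k + 1) = S.mem k + 1 ∨ S.mem (k + 1) = 0
  mem_le_self : ∀ k, S.mem k ≤ k
  mem_le : ∀ k, S.mem k ≤ m
  res_ctrl : ∀ k, 1 ≤ S.mem k → ‖S.r k‖ ≤ η * ‖S.r (k - S.mem k)‖
  vq_ctrl : ∀ k, 1 ≤ S.mem k →
    τ * |⟪S.v (k - S.mem k + 1), S.q (k - S.mem k + 1)⟫_ℝ| ≤ |⟪S.v k, S.q k⟫_ℝ|
  pair_one : ∀ k, S.mem k = 1 →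
    S.p k = S.x k - S.x (k - 1) ∧ S.q k = S.r k - S.r (k - 1)
  pair_two : ∀ k, S.mem k = 2 →
    S.p k = (S.x k - S.x (k - 1)) - S.ζ k 1 • S.p (k - 1) ∧
    S.q k = (S.r k - S.r (k - 1)) - S.ζ k 1 • S.q (k - 1) ∧
    ⟪S.v (k - 1), S.q k⟫_ℝ = 0
  pair_three : ∀ k, 3 ≤ S.mem k →
    S.p k = (S.x k - S.x (k - 1)) - S.ζ k 0 • S.p (k - 2) - S.ζ k 1 • S.p (k - 1) ∧
    S.q k = (S.r k - S.r (k - 1)) - S.ζ k 0 • S.q (k - 2) - S.ζ k 1 • S.q (k - 1) ∧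
    ⟪S.v (k - 2), S.q k⟫_ℝ = 0 ∧ ⟪S.v (k - 1), S.q k⟫_ℝ = 0
  orth_last : ∀ k, 1 ≤ S.mem k → ⟪S.v k, S.rbar k⟫_ℝ = 0
  orth_prev : ∀ k, 2 ≤ S.mem k → ⟪S.v (k - 1), S.rbar k⟫_ℝ = 0
  update : ∀ k, S.x (k + 1) = S.xbar k + S.β k • S.rbar k

end STRun

section Tridiagonal

variable {R M : Type*} [Semiring R] [AddCommMonoid M] [Module R M]

/-- The tridiagonal array whose column `j` has `up j`, `di j`, `lo j` in rows `j - 1`, `j`,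
`j + 1`. -/
def tridiag (up di lo : ℕ → R) (i j : ℕ) : R :=
  if i = j then di j else if i = j + 1 then lo j else if j = i + 1 then up j else 0

variable (up di lo : ℕ → R)

lemma tridiag_eq_zero {i j : ℕ} (h : j + 1 < i ∨ i + 1 < j) : tridiag up di lo i j = 0 := by
  unfold tridiag
  split_ifs <;> first | rfl | omega

lemma tridiag_of_lt {i j : ℕ} (h : j < i) :
    tridiag up di lo i j = if i = j + 1 then lo j else 0 := by
  unfold tridiag
  split_ifs <;> first | rfl | omega

lemma sum_range_tridiag_smul (P : ℕ → M) {n j : ℕ} (hj : j < n) :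
    ∑ i ∈ range (n + 1), tridiag up di lo i j • P i =
      (if 1 ≤ j then up j • P (j - 1) else 0) + di j • P j + lo j • P (j + 1) := by
  have hsplit : ∀ i, tridiag up di lo i j • P i =
      (if j = i then di j • P i else 0) + (if j + 1 = i then lo j • P i else 0) +
        (if j = i + 1 then up j • P i else 0) := by
    intro i
    unfold tridiag
    split_ifs <;> first | omega | simp
  have hup : ∑ i ∈ range (n + 1), (if j = i + 1 then up j • P i else 0) =
      if 1 ≤ j then up j • P (j - 1) else 0 := by
    cases j with
    | zero => simp
    | succ j => simp [sum_ite_eq, show j < n + 1 by omega]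
  rw [sum_congr rfl fun i _ => hsplit i, sum_add_distrib, sum_add_distrib, sum_ite_eq,
    sum_ite_eq, if_pos (mem_range.2 (by omega)), if_pos (mem_range.2 (by omega)), hup]
  abel

end Tridiagonal

section MatrixVector

variable {d : ℕ} (A : Matrix (Fin d) (Fin d) ℝ)

@[simp] lemma mvE_add (x y : E d) : mvE A (x + y) = mvE A x + mvE A y := by simp [mvE]

@[simp] lemma mvE_sub (x y : E d) : mvE A (x - y) = mvE A x - mvE A y := by simp [mvE]

@[simp] lemma mvE_smul (c : ℝ) (x : E d) : mvE A (c • x) = c • mvE A x := by simp [mvE]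

@[simp] lemma mvE_zero : mvE A (0 : E d) = 0 := by simp [mvE]

variable {A} in
lemma inner_mvE_left (hA : Aᵀ = A) (x y : E d) : ⟪mvE A x, y⟫_ℝ = ⟪x, mvE A y⟫_ℝ :=
  isSymmetric_toEuclideanLin_iff.2 (by simp [IsHermitian, hA]) x y

end MatrixVector

namespace STRun

section Definitions

variable {d : ℕ} (S : STRun d) (A : Matrix (Fin d) (Fin d) ℝ)

def φ (u : ℕ) : ℝ := if S.mem u = 0 then 0 else S.Γ u 1 + S.ζ (u + 1) 1

/-- The paper's `t_t^{(m_t - 1)}`. -/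
def coeffPrev (t : ℕ) : ℝ := S.φ (t - 1) / (S.β (t - 1) * (1 - S.Γ t 1))

/-- The paper's `t_t^{(m_t)}`. -/
def coeffSelf (t : ℕ) : ℝ := (1 / (1 - S.Γ t 1)) * (1 / S.β (t - 1) - S.φ t / S.β t)

/-- The paper's `t_t^{(m_t + 1)}`. -/
def coeffNext (t : ℕ) : ℝ := -(1 / (S.β t * (1 - S.Γ t 1)))

def ThreeTerm (t : ℕ) : Prop :=
  mvE A (S.p t) =
    (if 2 ≤ S.mem t then S.coeffPrev t • S.p (t - 1) else 0) +
      S.coeffSelf t • S.p t + S.coeffNext t • S.p (t + 1)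

/-- For `1 ≤ m_j` one has `v_j = V p_j`, with `V = 1` (Type-I) or `V = -A` (Type-II). -/
def vMap : E d →ₗ[ℝ] E d := if S.typeII then -Matrix.toEuclideanLin A else LinearMap.id

end Definitions

variable {d : ℕ} {A : Matrix (Fin d) (Fin d) ℝ} {b : E d} {S : STRun d} {m : ℕ} {τ η : ℝ}

lemma φ_eq_zero {u : ℕ} (h : S.mem u = 0) : S.φ u = 0 := if_pos h

lemma φ_eq {u : ℕ} (h : 1 ≤ S.mem u) : S.φ u = S.Γ u 1 + S.ζ (u + 1) 1 := if_neg (by omega)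

lemma r_eq (hg : S.g = fun u => u - mvE A u + b) (j : ℕ) : S.r j = b - mvE A (S.x j) := by
  simp only [r, hg]
  abel

lemma r_sub_r (hg : S.g = fun u => u - mvE A u + b) (i j : ℕ) :
    S.r i - S.r j = -mvE A (S.x i - S.x j) := by
  rw [r_eq hg, r_eq hg, mvE_sub]
  abel

lemma inner_rbar (w : E d) (t : ℕ) :
    ⟪w, S.rbar t⟫_ℝ = ⟪w, S.r t⟫_ℝ
      - (if 2 ≤ S.mem t then S.Γ t 0 * ⟪w, S.q (t - 1)⟫_ℝ else 0)
      - (if 1 ≤ S.mem t then S.Γ t 1 * ⟪w, S.q t⟫_ℝ else 0) := by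
  unfold rbar
  split_ifs <;> simp only [inner_sub_right, real_inner_smul_right, inner_zero_right]

lemma vMap_mvE (u : E d) : S.vMap A (mvE A u) = mvE A (S.vMap A u) := by
  unfold vMap
  split_ifs <;> simp [mvE]

lemma inner_vMap_left (hA : Aᵀ = A) (u w : E d) :
    ⟪S.vMap A u, w⟫_ℝ = ⟪u, S.vMap A w⟫_ℝ := by
  unfold vMap
  split_ifs
  · have h := inner_mvE_left hA u w
    simp only [mvE] at h
    simp [h]
  · rfl

lemma inner_vMap_self_ne_zero (hpd : ∀ y : E d, y ≠ 0 → 0 < ⟪y, mvE A y⟫_ℝ) {u : E d}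
    (hu : u ≠ 0) : ⟪S.vMap A u, u⟫_ℝ ≠ 0 := by
  unfold vMap
  split_ifs
  · have := hpd u hu
    rw [real_inner_comm] at this
    simpa [mvE] using this.ne'
  · simpa using hu

namespace IsRestarted

lemma one_le_of_one_le_mem (hrun : S.IsRestarted m τ η) {t : ℕ} (ht : 1 ≤ S.mem t) : 1 ≤ t :=
  ht.trans (hrun.mem_le_self t)

lemma mem_sub_one_add_one (hrun : S.IsRestarted m τ η) {t : ℕ} (ht : 1 ≤ S.mem t) :
    S.mem (t - 1) + 1 = S.mem t := by
  have h := hrun.mem_succ (t - 1)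
  rw [Nat.sub_add_cancel (hrun.one_le_of_one_le_mem ht)] at h
  omega

lemma mem_sub (hrun : S.IsRestarted m τ η) {t : ℕ} :
    ∀ {j : ℕ}, j < S.mem t → S.mem (t - j) = S.mem t - j
  | 0, _ => rfl
  | j + 1, hj => by
    have ih : S.mem (t - j) = S.mem t - j := hrun.mem_sub (by omega)
    have h := hrun.mem_sub_one_add_one (t := t - j) (by omega)
    rw [Nat.sub_sub] at h
    omega

lemma mem_cycle (hrun : S.IsRestarted m τ η) {t j : ℕ} (hj : j < S.mem t) :
    S.mem (t - S.mem t + 1 + j) = j + 1 := by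
  have h := hrun.mem_sub (t := t) (j := S.mem t - 1 - j) (by omega)
  rw [show t - (S.mem t - 1 - j) = t - S.mem t + 1 + j by have := hrun.mem_le_self t; omega] at h
  omega

lemma q_eq_neg_mvE_p (hrun : S.IsRestarted m τ η) (hg : S.g = fun u => u - mvE A u + b) :
    ∀ j, 1 ≤ S.mem j → S.q j = -mvE A (S.p j) := by
  intro j
  induction j using Nat.strong_induction_on with
  | _ j ih =>
    intro hj
    have hpred := hrun.mem_sub_one_add_one hj
    have hj1 := hrun.one_le_of_one_le_mem hj
    rcases (by omega : S.mem j = 1 ∨ S.mem j = 2 ∨ 3 ≤ S.mem j) with h1 | h2 | h3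
    · obtain ⟨hp, hq⟩ := hrun.pair_one j h1
      rw [hq, r_sub_r hg, hp]
    · obtain ⟨hp, hq, -⟩ := hrun.pair_two j h2
      rw [hq, r_sub_r hg, ih (j - 1) (by omega) (by omega), hp]
      simp only [mvE_sub, mvE_smul]
      module
    · obtain ⟨hp, hq, -, -⟩ := hrun.pair_three j h3
      have hpred' := hrun.mem_sub_one_add_one (t := j - 1) (by omega)
      rw [hq, r_sub_r hg, ih (j - 1) (by omega) (by omega),
        ih (j - 2) (by omega) (by rw [show j - 2 = j - 1 - 1 by omega]; omega), hp]
      simp only [mvE_sub, mvE_smul]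
      module

lemma rbar_sub_r (hrun : S.IsRestarted m τ η) (hg : S.g = fun u => u - mvE A u + b) (t : ℕ) :
    S.rbar t - S.r t = -mvE A (S.xbar t - S.x t) := by
  unfold rbar xbar
  split_ifs with h2 h1 h1
  · rw [hrun.q_eq_neg_mvE_p hg t h1,
      hrun.q_eq_neg_mvE_p hg (t - 1) (by have := hrun.mem_sub_one_add_one h1; omega)]
    simp only [mvE_sub, mvE_smul]
    module
  · omega
  · rw [hrun.q_eq_neg_mvE_p hg t h1]
    simp only [mvE_sub, mvE_smul, mvE_zero]
    module
  · simp

lemma r_succ (hrun : S.IsRestarted m τ η) (hg : S.g = fun u => u - mvE A u + b) (t : ℕ) :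
    S.r (t + 1) = S.rbar t - S.β t • mvE A (S.rbar t) := by
  have hr := r_sub_r hg (t + 1) t
  have hrbar := hrun.rbar_sub_r hg t
  rw [hrun.update t] at hr
  simp only [mvE_add, mvE_sub, mvE_smul] at hr hrbar
  linear_combination (norm := module) hr - hrbar

lemma r_eq_rbar_sub_one (hrun : S.IsRestarted m τ η) (hg : S.g = fun u => u - mvE A u + b)
    {t : ℕ} (ht : 1 ≤ t) : S.r t = S.rbar (t - 1) - S.β (t - 1) • mvE A (S.rbar (t - 1)) := by
  simpa only [Nat.sub_add_cancel ht] using hrun.r_succ hg (t - 1)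

lemma inner_v_sub_one_q (hrun : S.IsRestarted m τ η) {t : ℕ} (h2 : 2 ≤ S.mem t) :
    ⟪S.v (t - 1), S.q t⟫_ℝ = 0 := by
  rcases h2.eq_or_lt with h | h
  · exact (hrun.pair_two t h.symm).2.2
  · exact (hrun.pair_three t h).2.2.2

lemma inner_mvE_p (hrun : S.IsRestarted m τ η) (hg : S.g = fun u => u - mvE A u + b)
    {j : ℕ} (hj : 1 ≤ S.mem j) (w : E d) : ⟪w, mvE A (S.p j)⟫_ℝ = -⟪w, S.q j⟫_ℝ := by
  rw [hrun.q_eq_neg_mvE_p hg j hj, inner_neg_right, neg_neg]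

lemma v_eq_vMap (hrun : S.IsRestarted m τ η) (hg : S.g = fun u => u - mvE A u + b) {j : ℕ}
    (hj : 1 ≤ S.mem j) : S.v j = S.vMap A (S.p j) := by
  unfold v vMap
  split_ifs
  · rw [hrun.q_eq_neg_mvE_p hg j hj]
    rfl
  · rfl

lemma inner_v_q_comm (hrun : S.IsRestarted m τ η) (hA : Aᵀ = A)
    (hg : S.g = fun u => u - mvE A u + b) {i j : ℕ} (hi : 1 ≤ S.mem i) (hj : 1 ≤ S.mem j) :
    ⟪S.v i, S.q j⟫_ℝ = ⟪S.v j, S.q i⟫_ℝ := by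
  rw [hrun.v_eq_vMap hg hi, hrun.v_eq_vMap hg hj, hrun.q_eq_neg_mvE_p hg i hi,
    hrun.q_eq_neg_mvE_p hg j hj, inner_neg_right, inner_neg_right, inner_vMap_left hA,
    vMap_mvE, ← inner_mvE_left hA, real_inner_comm]

lemma inner_v_q_sub_one (hrun : S.IsRestarted m τ η) (hA : Aᵀ = A)
    (hg : S.g = fun u => u - mvE A u + b) {t : ℕ} (h2 : 2 ≤ S.mem t) :
    ⟪S.v t, S.q (t - 1)⟫_ℝ = 0 := by
  have := hrun.mem_sub_one_add_one (t := t) (by omega)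
  rw [hrun.inner_v_q_comm hA hg (by omega) (by omega), hrun.inner_v_sub_one_q h2]

lemma Γ_zero_mul_inner_v_q (hrun : S.IsRestarted m τ η) {t : ℕ} (h2 : 2 ≤ S.mem t) :
    S.Γ t 0 * ⟪S.v (t - 1), S.q (t - 1)⟫_ℝ = ⟪S.v (t - 1), S.r t⟫_ℝ := by
  have h := hrun.orth_prev t h2
  rw [inner_rbar, if_pos h2, if_pos (by omega), hrun.inner_v_sub_one_q h2] at h
  linarith

lemma φ_sub_one_mul_inner_v_q (hrun : S.IsRestarted m τ η) (hA : Aᵀ = A)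
    (hg : S.g = fun u => u - mvE A u + b) {t : ℕ} (h2 : 2 ≤ S.mem t) :
    S.φ (t - 1) * ⟪S.v (t - 1), S.q (t - 1)⟫_ℝ = ⟪S.v (t - 1), S.r t⟫_ℝ := by
  have hpred := hrun.mem_sub_one_add_one (t := t) (by omega)
  have ht := hrun.one_le_of_one_le_mem (t := t) (by omega)
  have hprev : 2 ≤ S.mem (t - 1) → ⟪S.v (t - 1), S.q (t - 2)⟫_ℝ = 0 := fun h => by
    rw [show t - 2 = t - 1 - 1 by omega]
    exact hrun.inner_v_q_sub_one hA hg h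
  have hΓ : S.Γ (t - 1) 1 * ⟪S.v (t - 1), S.q (t - 1)⟫_ℝ = ⟪S.v (t - 1), S.r (t - 1)⟫_ℝ := by
    have h := hrun.orth_last (t - 1) (by omega)
    rw [inner_rbar, if_pos (show 1 ≤ S.mem (t - 1) by omega), show t - 1 - 1 = t - 2 by omega] at h
    split_ifs at h with h2'
    · rw [hprev h2'] at h
      linarith
    · linarith
  have hζ : S.ζ t 1 * ⟪S.v (t - 1), S.q (t - 1)⟫_ℝ =
      ⟪S.v (t - 1), S.r t⟫_ℝ - ⟪S.v (t - 1), S.r (t - 1)⟫_ℝ := by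
    have h := hrun.inner_v_sub_one_q h2
    rcases h2.eq_or_lt with h2 | h3
    · rw [(hrun.pair_two t h2.symm).2.1] at h
      simp only [inner_sub_right, real_inner_smul_right] at h
      linarith
    · rw [(hrun.pair_three t h3).2.1] at h
      simp only [inner_sub_right, real_inner_smul_right, hprev (by omega)] at h
      linarith
  rw [φ_eq (by omega), Nat.sub_add_cancel ht]
  linarith

lemma Γ_zero_eq_φ (hrun : S.IsRestarted m τ η) (hA : Aᵀ = A)
    (hg : S.g = fun u => u - mvE A u + b) {t : ℕ} (h2 : 2 ≤ S.mem t)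
    (hD : ⟪S.v (t - 1), S.q (t - 1)⟫_ℝ ≠ 0) : S.Γ t 0 = S.φ (t - 1) :=
  mul_right_cancel₀ hD <|
    (hrun.Γ_zero_mul_inner_v_q h2).trans (hrun.φ_sub_one_mul_inner_v_q hA hg h2).symm

lemma p_eq (hrun : S.IsRestarted m τ η) {t : ℕ} (ht : 1 ≤ S.mem t)
    (hζ : 3 ≤ S.mem t → S.Γ (t - 1) 0 + S.ζ t 0 = 0) :
    S.p t = S.β (t - 1) • S.rbar (t - 1) - S.φ (t - 1) • S.p (t - 1) := by
  have hpred := hrun.mem_sub_one_add_one ht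
  have ht1 := hrun.one_le_of_one_le_mem ht
  have hx : S.x t = S.xbar (t - 1) + S.β (t - 1) • S.rbar (t - 1) := by
    simpa only [Nat.sub_add_cancel ht1] using hrun.update (t - 1)
  rcases (by omega : S.mem t = 1 ∨ S.mem t = 2 ∨ 3 ≤ S.mem t) with h1 | h2 | h3
  · rw [(hrun.pair_one t h1).1, hx, φ_eq_zero (by omega)]
    unfold xbar
    rw [if_neg (by omega), if_neg (by omega)]
    module
  · rw [(hrun.pair_two t h2).1, hx, φ_eq (by omega), Nat.sub_add_cancel ht1]
    unfold xbar
    rw [if_neg (by omega), if_pos (by omega)]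
    module
  · rw [(hrun.pair_three t h3).1, hx, φ_eq (by omega), Nat.sub_add_cancel ht1,
      show S.ζ t 0 = -S.Γ (t - 1) 0 by linarith [hζ h3]]
    unfold xbar
    rw [if_pos (by omega), if_pos (by omega), show t - 1 - 1 = t - 2 by omega]
    module

lemma Γ_zero_add_ζ_zero (hrun : S.IsRestarted m τ η) {t : ℕ} (h3 : 3 ≤ S.mem (t + 1))
    (hD : ⟪S.v (t - 1), S.q (t - 1)⟫_ℝ ≠ 0) (hr : ⟪S.v (t - 1), S.r (t + 1)⟫_ℝ = 0) :
    S.Γ t 0 + S.ζ (t + 1) 0 = 0 := by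
  have h2 : 2 ≤ S.mem t := by
    have := hrun.mem_sub_one_add_one (t := t + 1) (by omega)
    simp only [Nat.add_sub_cancel] at this
    omega
  have h := (hrun.pair_three (t + 1) h3).2.2.1
  rw [(hrun.pair_three (t + 1) h3).2.1, show t + 1 - 2 = t - 1 by omega, Nat.add_sub_cancel] at h
  simp only [inner_sub_right, real_inner_smul_right, hr, hrun.inner_v_sub_one_q h2,
    ← hrun.Γ_zero_mul_inner_v_q h2] at h
  exact (mul_eq_zero.1 (by linarith : (S.Γ t 0 + S.ζ (t + 1) 0) * _ = 0)).resolve_right hD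

lemma inner_v_mvE_eq_zero (hrun : S.IsRestarted m τ η) (hA : Aᵀ = A)
    (hg : S.g = fun u => u - mvE A u + b) {i : ℕ} (hrec : S.ThreeTerm A i)
    (hi : 1 ≤ S.mem i) (hi1 : 1 ≤ S.mem (i + 1)) {w : E d}
    (h₀ : 2 ≤ S.mem i → ⟪S.v (i - 1), w⟫_ℝ = 0) (h₁ : ⟪S.v i, w⟫_ℝ = 0)
    (h₂ : ⟪S.v (i + 1), w⟫_ℝ = 0) : ⟪S.v i, mvE A w⟫_ℝ = 0 := by
  have hpred := hrun.mem_sub_one_add_one hi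
  rw [hrun.v_eq_vMap hg hi] at h₁ ⊢
  rw [hrun.v_eq_vMap hg hi1] at h₂
  rw [← inner_mvE_left hA, ← vMap_mvE, hrec]
  simp only [map_add, map_smul, inner_add_left, real_inner_smul_left, h₁, h₂]
  split_ifs with h2
  · rw [map_smul, real_inner_smul_left, ← hrun.v_eq_vMap hg (by omega), h₀ h2]
    ring
  · simp

lemma one_sub_Γ_smul_mvE_p (hrun : S.IsRestarted m τ η) (hg : S.g = fun u => u - mvE A u + b)
    {t : ℕ} (ht : 1 ≤ S.mem t)
    (hp : S.p t = S.β (t - 1) • S.rbar (t - 1) - S.φ (t - 1) • S.p (t - 1))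
    (hΓ : 2 ≤ S.mem t → S.Γ t 0 = S.φ (t - 1)) :
    (1 - S.Γ t 1) • mvE A (S.p t) = S.rbar (t - 1) - S.rbar t := by
  have hpred := hrun.mem_sub_one_add_one ht
  have hr := hrun.r_eq_rbar_sub_one hg (hrun.one_le_of_one_le_mem ht)
  have hprev : (if 2 ≤ S.mem t then S.Γ t 0 • S.q (t - 1) else 0) =
      -(S.φ (t - 1) • mvE A (S.p (t - 1))) := by
    split_ifs with h2
    · rw [hΓ h2, hrun.q_eq_neg_mvE_p hg (t - 1) (by omega), smul_neg]
    · rw [φ_eq_zero (by omega), zero_smul, neg_zero]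
  have hrbar : S.rbar t = S.r t - (if 2 ≤ S.mem t then S.Γ t 0 • S.q (t - 1) else 0) -
      S.Γ t 1 • S.q t := by
    rw [rbar, if_pos ht]
  rw [hrbar, hprev, hr, hrun.q_eq_neg_mvE_p hg t ht, hp]
  simp only [mvE_sub, mvE_smul]
  module

lemma one_sub_Γ_mul_inner_v_q (hrun : S.IsRestarted m τ η) (hA : Aᵀ = A)
    (hg : S.g = fun u => u - mvE A u + b) {t : ℕ} (ht : 1 ≤ S.mem t)
    (hp : S.p t = S.β (t - 1) • S.rbar (t - 1) - S.φ (t - 1) • S.p (t - 1)) :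
    (1 - S.Γ t 1) * ⟪S.v t, S.q t⟫_ℝ = -⟪S.v t, S.rbar (t - 1)⟫_ℝ := by
  have hpred := hrun.mem_sub_one_add_one ht
  have hr := hrun.r_eq_rbar_sub_one hg (hrun.one_le_of_one_le_mem ht)
  have hlast : ⟪S.v t, S.r t⟫_ℝ = S.Γ t 1 * ⟪S.v t, S.q t⟫_ℝ := by
    have h := hrun.orth_last t ht
    rw [inner_rbar, if_pos ht] at h
    split_ifs at h with h2
    · rw [hrun.inner_v_q_sub_one hA hg h2] at h
      linarith
    · linarith
  have hφ : S.φ (t - 1) * ⟪S.v t, mvE A (S.p (t - 1))⟫_ℝ = 0 := by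
    by_cases h2 : 2 ≤ S.mem t
    · rw [hrun.inner_mvE_p hg (by omega), hrun.inner_v_q_sub_one hA hg h2, neg_zero, mul_zero]
    · rw [φ_eq_zero (by omega), zero_mul]
  have hqr : ⟪S.v t, S.q t⟫_ℝ - ⟪S.v t, S.r t⟫_ℝ = -⟪S.v t, S.rbar (t - 1)⟫_ℝ := by
    rw [hrun.q_eq_neg_mvE_p hg t ht, hr, hp]
    simp only [mvE_sub, mvE_smul, inner_neg_right, inner_sub_right, real_inner_smul_right]
    linarith
  linarith

lemma inner_v_rbar_sub_one_ne_zero (hrun : S.IsRestarted m τ η)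
    (hpd : ∀ y : E d, y ≠ 0 → 0 < ⟪y, mvE A y⟫_ℝ) (hg : S.g = fun u => u - mvE A u + b)
    {t : ℕ} (ht : 1 ≤ S.mem t) (hβ : S.β (t - 1) ≠ 0) (hrt : S.r t ≠ 0)
    (hp : S.p t = S.β (t - 1) • S.rbar (t - 1) - S.φ (t - 1) • S.p (t - 1))
    (horth : 2 ≤ S.mem t → ⟪S.v (t - 1), S.rbar (t - 1)⟫_ℝ = 0) :
    ⟪S.v t, S.rbar (t - 1)⟫_ℝ ≠ 0 := by
  have hpred := hrun.mem_sub_one_add_one ht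
  have hrbar : S.rbar (t - 1) ≠ 0 := by
    intro h0
    apply hrt
    rw [hrun.r_eq_rbar_sub_one hg (hrun.one_le_of_one_le_mem ht), h0, mvE_zero, smul_zero,
      sub_zero]
  have hφ : S.φ (t - 1) * ⟪S.vMap A (S.p (t - 1)), S.rbar (t - 1)⟫_ℝ = 0 := by
    by_cases h2 : 2 ≤ S.mem t
    · rw [← hrun.v_eq_vMap hg (by omega), horth h2, mul_zero]
    · rw [φ_eq_zero (by omega), zero_mul]
  rw [hrun.v_eq_vMap hg ht, hp, map_sub, map_smul, map_smul, inner_sub_left,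
    real_inner_smul_left, real_inner_smul_left, hφ, sub_zero]
  exact mul_ne_zero hβ (inner_vMap_self_ne_zero hpd hrbar)

lemma threeTerm (hrun : S.IsRestarted m τ η) {t : ℕ} (ht : 1 ≤ S.mem t)
    (hβ₀ : S.β (t - 1) ≠ 0) (hβ₁ : S.β t ≠ 0) (hΓ : 1 - S.Γ t 1 ≠ 0)
    (hkey : (1 - S.Γ t 1) • mvE A (S.p t) = S.rbar (t - 1) - S.rbar t)
    (hp : S.p t = S.β (t - 1) • S.rbar (t - 1) - S.φ (t - 1) • S.p (t - 1))
    (hp' : S.p (t + 1) = S.β t • S.rbar t - S.φ t • S.p t) : S.ThreeTerm A t := by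
  have hprev : (if 2 ≤ S.mem t then S.coeffPrev t • S.p (t - 1) else 0) =
      S.coeffPrev t • S.p (t - 1) := by
    split_ifs with h2
    · rfl
    · rw [coeffPrev, φ_eq_zero (by have := hrun.mem_sub_one_add_one ht; omega), zero_div,
        zero_smul]
  have hrbar₀ : S.rbar (t - 1) = (S.β (t - 1))⁻¹ • (S.p t + S.φ (t - 1) • S.p (t - 1)) := by
    rw [hp, sub_add_cancel, smul_smul, inv_mul_cancel₀ hβ₀, one_smul]
  have hrbar₁ : S.rbar t = (S.β t)⁻¹ • (S.p (t + 1) + S.φ t • S.p t) := by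
    rw [hp', sub_add_cancel, smul_smul, inv_mul_cancel₀ hβ₁, one_smul]
  rw [ThreeTerm, hprev, ← inv_smul_smul₀ hΓ (mvE A (S.p t)), hkey, hrbar₀, hrbar₁,
    coeffPrev, coeffSelf, coeffNext]
  match_scalars <;> field_simp

end IsRestarted

/-- The invariant carried along a restart cycle: the indices `t - m_t < i ≤ t` are those of the
current cycle. -/
structure CycleInv (A : Matrix (Fin d) (Fin d) ℝ) (S : STRun d) (t : ℕ) : Prop where
  p_eq : S.p t = S.β (t - 1) • S.rbar (t - 1) - S.φ (t - 1) • S.p (t - 1)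
  one_sub_Γ_smul_mvE_p : (1 - S.Γ t 1) • mvE A (S.p t) = S.rbar (t - 1) - S.rbar t
  inner_v_q : ∀ i, t - S.mem t < i → i < t → ⟪S.v i, S.q t⟫_ℝ = 0
  inner_v_rbar : ∀ i, t - S.mem t < i → i ≤ t → ⟪S.v i, S.rbar t⟫_ℝ = 0
  inner_v_q_ne_zero : ⟪S.v t, S.q t⟫_ℝ ≠ 0
  one_sub_Γ_ne_zero : 1 - S.Γ t 1 ≠ 0
  threeTerm_sub_one : 2 ≤ S.mem t → S.ThreeTerm A (t - 1)

lemma IsRestarted.cycleInv_of_sub_one (hrun : S.IsRestarted m τ η) (hA : Aᵀ = A)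
    (hpd : ∀ y : E d, y ≠ 0 → 0 < ⟪y, mvE A y⟫_ℝ) (hg : S.g = fun u => u - mvE A u + b)
    (hβ : ∀ j, S.β j ≠ 0) {t : ℕ} (ht : 1 ≤ S.mem t) (hrt : S.r t ≠ 0)
    (hprev : 2 ≤ S.mem t → S.CycleInv A (t - 1))
    (hζ : 3 ≤ S.mem t → S.Γ (t - 1) 0 + S.ζ t 0 = 0)
    (hAr : ∀ i, t - S.mem t < i → i + 2 ≤ t → ⟪S.v i, mvE A (S.rbar (t - 1))⟫_ℝ = 0) :
    S.CycleInv A t := by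
  have hpred := hrun.mem_sub_one_add_one ht
  have ht1 := hrun.one_le_of_one_le_mem ht
  have hle := hrun.mem_le_self t
  have hp := hrun.p_eq ht hζ
  have hkey := hrun.one_sub_Γ_smul_mvE_p hg ht hp fun h2 =>
    hrun.Γ_zero_eq_φ hA hg h2 (hprev h2).inner_v_q_ne_zero
  have hrbar_prev : ∀ i, t - S.mem t < i → i < t → ⟪S.v i, S.rbar (t - 1)⟫_ℝ = 0 :=
    fun i hi hit => (hprev (by omega)).inner_v_rbar i (by omega) (by omega)
  have hq : ∀ i, t - S.mem t < i → i < t → ⟪S.v i, S.q t⟫_ℝ = 0 := by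
    intro i hi hit
    rcases (by omega : i = t - 1 ∨ i + 2 ≤ t) with rfl | hit2
    · exact hrun.inner_v_sub_one_q (by omega)
    · have hAp : ⟪S.v i, mvE A (S.p (t - 1))⟫_ℝ = 0 := by
        rw [hrun.inner_mvE_p hg (by omega), (hprev (by omega)).inner_v_q i (by omega) (by omega),
          neg_zero]
      rw [hrun.q_eq_neg_mvE_p hg t ht, hp]
      simp only [mvE_sub, mvE_smul, inner_neg_right, inner_sub_right, real_inner_smul_right,
        hAr i hi hit2, hAp, mul_zero, sub_zero, neg_zero]
  have hrbar : ∀ i, t - S.mem t < i → i ≤ t → ⟪S.v i, S.rbar t⟫_ℝ = 0 := by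
    intro i hi hit
    rcases hit.eq_or_lt with rfl | hit
    · exact hrun.orth_last i ht
    · have e : S.rbar t = S.rbar (t - 1) - (1 - S.Γ t 1) • mvE A (S.p t) := by
        rw [hkey, sub_sub_cancel]
      rw [e, inner_sub_right, real_inner_smul_right, hrun.inner_mvE_p hg ht, hq i hi hit,
        hrbar_prev i hi hit, neg_zero, mul_zero, sub_zero]
  have hnd : (1 - S.Γ t 1) * ⟪S.v t, S.q t⟫_ℝ ≠ 0 := by
    rw [hrun.one_sub_Γ_mul_inner_v_q hA hg ht hp, neg_ne_zero]
    exact hrun.inner_v_rbar_sub_one_ne_zero hpd hg ht (hβ _) hrt hp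
      fun h2 => hrbar_prev (t - 1) (by omega) (by omega)
  refine ⟨hp, hkey, hq, hrbar, right_ne_zero_of_mul hnd, left_ne_zero_of_mul hnd, fun h2 => ?_⟩
  have I := hprev h2
  exact hrun.threeTerm (by omega) (hβ _) (hβ _) I.one_sub_Γ_ne_zero I.one_sub_Γ_smul_mvE_p I.p_eq
    (by rw [Nat.sub_add_cancel ht1]; exact hp)

lemma IsRestarted.cycleInv (hrun : S.IsRestarted m τ η) (hA : Aᵀ = A)
    (hpd : ∀ y : E d, y ≠ 0 → 0 < ⟪y, mvE A y⟫_ℝ) (hg : S.g = fun u => u - mvE A u + b)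
    (hβ : ∀ j, S.β j ≠ 0) :
    ∀ t, 1 ≤ S.mem t → (∀ j ≤ t, S.r j ≠ 0) → S.CycleInv A t := by
  intro t
  induction t using Nat.strong_induction_on with
  | _ t IH =>
  intro ht hne
  have hle := hrun.mem_le_self t
  have hpred := hrun.mem_sub_one_add_one ht
  have hmem : ∀ i, t - S.mem t < i → i ≤ t → S.mem i = S.mem t - (t - i) := fun i hi hit => by
    simpa only [Nat.sub_sub_self hit] using hrun.mem_sub (t := t) (j := t - i) (by omega)
  have IH' : ∀ i, t - S.mem t < i → i < t → S.CycleInv A i := fun i hi hit =>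
    IH i hit (by rw [hmem i hi hit.le]; omega) fun j hj => hne j (by omega)
  have hprev : 2 ≤ S.mem t → S.CycleInv A (t - 1) := fun h2 => IH' (t - 1) (by omega) (by omega)
  have hAr : ∀ i, t - S.mem t < i → i + 2 ≤ t → ⟪S.v i, mvE A (S.rbar (t - 1))⟫_ℝ = 0 := by
    intro i hi hit
    have I := hprev (by omega)
    have hmi := hmem i hi (by omega)
    have hmi1 := hmem (i + 1) (by omega) (by omega)
    have hrec : S.ThreeTerm A i := by
      simpa only [Nat.add_sub_cancel] using
        (IH' (i + 1) (by omega) (by omega)).threeTerm_sub_one (by omega)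
    refine hrun.inner_v_mvE_eq_zero hA hg hrec (by omega) (by omega) (fun h2 => ?_)
      (I.inner_v_rbar i (by omega) (by omega)) (I.inner_v_rbar (i + 1) (by omega) (by omega))
    exact I.inner_v_rbar (i - 1) (by omega) (by omega)
  have hζ : 3 ≤ S.mem t → S.Γ (t - 1) 0 + S.ζ t 0 = 0 := by
    intro h3
    have e₁ : t - 1 + 1 = t := by omega
    have e₂ : t - 1 - 1 = t - 2 := by omega
    have hr : ⟪S.v (t - 2), S.r t⟫_ℝ = 0 := by
      rw [hrun.r_eq_rbar_sub_one hg (by omega), inner_sub_right, real_inner_smul_right,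
        (hprev (by omega)).inner_v_rbar (t - 2) (by omega) (by omega), hAr (t - 2) (by omega)
          (by omega), mul_zero, sub_zero]
    have hD := (IH' (t - 2) (by omega) (by omega)).inner_v_q_ne_zero
    have h := hrun.Γ_zero_add_ζ_zero (t := t - 1) (by rwa [e₁]) (by rwa [e₂]) (by rwa [e₁, e₂])
    rwa [e₁] at h
  exact hrun.cycleInv_of_sub_one hA hpd hg hβ ht (hne t le_rfl) hprev hζ hAr

lemma IsRestarted.threeTerm_of_two_le_mem_succ (hrun : S.IsRestarted m τ η) (hA : Aᵀ = A)
    (hpd : ∀ y : E d, y ≠ 0 → 0 < ⟪y, mvE A y⟫_ℝ) (hg : S.g = fun u => u - mvE A u + b)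
    (hβ : ∀ j, S.β j ≠ 0) {t : ℕ} (h2 : 2 ≤ S.mem (t + 1)) (hne : ∀ j ≤ t + 1, S.r j ≠ 0) :
    S.ThreeTerm A t := by
  simpa only [Nat.add_sub_cancel] using
    (hrun.cycleInv hA hpd hg hβ (t + 1) (by omega) hne).threeTerm_sub_one h2

lemma IsRestarted.Γ_zero_eq_div (hrun : S.IsRestarted m τ η) {t : ℕ} (h2 : 2 ≤ S.mem t)
    (hD : ⟪S.v (t - 1), S.q (t - 1)⟫_ℝ ≠ 0) :
    S.Γ t 0 = ⟪S.v (t - 1), S.r t⟫_ℝ / ⟪S.v (t - 1), S.q (t - 1)⟫_ℝ :=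
  (eq_div_iff hD).2 (hrun.Γ_zero_mul_inner_v_q h2)

lemma exists_tridiag_of_threeTerm {s n : ℕ} (hn : 1 ≤ n)
    (hrec : ∀ j < n, S.ThreeTerm A (s + j)) (hmem : ∀ j < n, S.mem (s + j) = j + 1) :
    ∃ Tb : ℕ → ℕ → ℝ,
      (∀ i j : ℕ, j + 1 < i ∨ i + 1 < j → Tb i j = 0) ∧
      Tb n (n - 1) = S.coeffNext (s + (n - 1)) ∧
      (∀ j < n, mvE A (S.p (s + j)) = ∑ i ∈ range (n + 1), Tb i j • S.p (s + i)) ∧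
      (∀ j < n, mvE A (S.p (s + j)) =
        (∑ i ∈ range n, Tb i j • S.p (s + i)) +
          (if j + 1 = n then Tb n j else 0) • S.p (s + n)) := by
  set Tb := tridiag (fun j => S.coeffPrev (s + j)) (fun j => S.coeffSelf (s + j))
    (fun j => S.coeffNext (s + j))
  have hcol : ∀ j < n, mvE A (S.p (s + j)) = ∑ i ∈ range (n + 1), Tb i j • S.p (s + i) := by
    intro j hj
    rw [sum_range_tridiag_smul _ _ _ _ hj, hrec j hj, hmem j hj]
    congr 2
    cases j with
    | zero => simp
    | succ j => simp
  refine ⟨Tb, fun i j h => tridiag_eq_zero _ _ _ h, ?_, hcol, fun j hj => ?_⟩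
  · simp only [Tb]
    rw [tridiag_of_lt _ _ _ (by omega), if_pos (by omega)]
  · rw [hcol j hj, sum_range_succ]
    congr 2
    split_ifs with h
    · rfl
    · simp only [Tb]
      rw [tridiag_of_lt _ _ _ hj, if_neg (by omega)]

end STRun

theorem stmt_15_general {d : ℕ} (A : Matrix (Fin d) (Fin d) ℝ) (b : E d)
    (hsymm : Aᵀ = A)
    (hpd : ∀ y : E d, y ≠ 0 → 0 < ⟪y, mvE A y⟫_ℝ)
    (m : ℕ) (τ η : ℝ)
    (S : STRun d) (hg : S.g = fun u => u - mvE A u + b)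
    (hβpos : ∀ j, 0 < S.β j)
    (hrun : S.IsRestarted m τ η)
    (k : ℕ) (hmem : 2 ≤ S.mem (k + 1))
    (hne : ∀ j ≤ k + 1, S.r j ≠ 0) :
    -- the three-term recurrence, with `φ_t = 0` when `m_t = 0`
    (mvE A (S.p k) =
        (if 2 ≤ S.mem k then
          ((if S.mem (k - 1) = 0 then 0 else S.Γ (k - 1) 1 + S.ζ k 1) /
            (S.β (k - 1) * (1 - S.Γ k 1))) • S.p (k - 1)
        else 0) +
        ((1 / (1 - S.Γ k 1)) *
          (1 / S.β (k - 1) -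
            (if S.mem k = 0 then 0 else S.Γ k 1 + S.ζ (k + 1) 1) / S.β k)) • S.p k +
        (-(1 / (S.β k * (1 - S.Γ k 1)))) • S.p (k + 1)) ∧
    -- `φ_k = Γ_k^{(m_k)} + ζ_{k+1}^{(m_k)} = Γ_{k+1}^{(m_k)} = v_kᵀ r_{k+1} / v_kᵀ q_k`
    (1 ≤ S.mem k →
      S.Γ k 1 + S.ζ (k + 1) 1 = S.Γ (k + 1) 0 ∧
      S.Γ (k + 1) 0 = ⟪S.v k, S.r (k + 1)⟫_ℝ / ⟪S.v k, S.q k⟫_ℝ) ∧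
    -- the tridiagonal matrix `T̄_k` with `A P_k = P_{k+1} T̄_k = P_k T_k + …`
    (∃ Tb : ℕ → ℕ → ℝ,
      (∀ i j : ℕ, j + 1 < i ∨ i + 1 < j → Tb i j = 0) ∧
      Tb (S.mem k) (S.mem k - 1) = -(1 / (S.β k * (1 - S.Γ k 1))) ∧
      (∀ j < S.mem k,
        mvE A (S.p (k - S.mem k + 1 + j)) =
          ∑ i ∈ Finset.range (S.mem k + 1), Tb i j • S.p (k - S.mem k + 1 + i)) ∧
      (∀ j < S.mem k,
        mvE A (S.p (k - S.mem k + 1 + j)) =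
          (∑ i ∈ Finset.range (S.mem k), Tb i j • S.p (k - S.mem k + 1 + i)) +
            (if j + 1 = S.mem k then Tb (S.mem k) j else 0) • S.p (k + 1))) := by
  have hβ : ∀ j, S.β j ≠ 0 := fun j => (hβpos j).ne'
  have hk : S.mem (k + 1) = S.mem k + 1 := (hrun.mem_succ k).resolve_right (by omega)
  have hle := hrun.mem_le_self k
  have hcycle : ∀ j ≤ S.mem k, S.mem (k - S.mem k + 1 + j) = j + 1 := fun j hj => by
    have h := hrun.mem_cycle (t := k + 1) (j := j) (by omega)
    rwa [hk, show k + 1 - (S.mem k + 1) = k - S.mem k by omega] at h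
  have hrec : ∀ j < S.mem k, S.ThreeTerm A (k - S.mem k + 1 + j) := fun j hj =>
    hrun.threeTerm_of_two_le_mem_succ hsymm hpd hg hβ (by have h := hcycle (j + 1) hj; rw [← Nat.add_assoc] at h; omega)
      fun i hi => hne i (by omega)
  refine ⟨?_, fun hk1 => ?_, ?_⟩
  · have h := hrec (S.mem k - 1) (by omega)
    rw [show k - S.mem k + 1 + (S.mem k - 1) = k by omega] at h
    unfold STRun.ThreeTerm STRun.coeffPrev STRun.coeffSelf STRun.coeffNext STRun.φ at h
    rwa [Nat.sub_add_cancel (by omega : 1 ≤ k)] at h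
  · have hD := (hrun.cycleInv hsymm hpd hg hβ k hk1 fun j hj => hne j (by omega)).inner_v_q_ne_zero
    have hφ := hrun.Γ_zero_eq_φ hsymm hg hmem hD
    have hdiv := hrun.Γ_zero_eq_div hmem hD
    rw [Nat.add_sub_cancel] at hφ hdiv
    rw [STRun.φ_eq hk1] at hφ
    exact ⟨hφ.symm, hdiv⟩
  · obtain ⟨Tb, hzero, hlast, hcol, hcol'⟩ := STRun.exists_tridiag_of_threeTerm (by omega) hrec
      fun j hj => hcycle j hj.le
    refine ⟨Tb, hzero, ?_, hcol, ?_⟩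
    · rw [hlast, show k - S.mem k + 1 + (S.mem k - 1) = k by omega]
      rfl
    · rwa [show k + 1 = k - S.mem k + 1 + S.mem k by omega]

/-- Proposition 6.2 of the paper.  For the restarted
Type-I/Type-II ST-AM applied to `g(x) = (I-A)x + b` with `A` symmetric positive
definite, if `m_{k+1} ≥ 2` at iteration `k+1` then
`A p_k = t_k^{(m_k-1)} p_{k-1} + t_k^{(m_k)} p_k + t_k^{(m_k+1)} p_{k+1}`
(with `p_{k-m_k} := 0`, i.e. the `p_{k-1}` term is absent when `m_k = 1`),
where `t_k^{(m_k-1)} = φ_{k-1}/(β_{k-1}(1-Γ_k^{(m_k)}))`,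
`t_k^{(m_k)} = (1/(1-Γ_k^{(m_k)}))(1/β_{k-1} - φ_k/β_k)`,
`t_k^{(m_k+1)} = -1/(β_k(1-Γ_k^{(m_k)}))`, and `φ_t := 0` for `m_t = 0` and
`φ_t := Γ_t^{(m_t)} + ζ_{t+1}^{(m_t)} = Γ_{t+1}^{(m_t)} = v_tᵀr_{t+1}/v_tᵀq_t`
for `m_t ≥ 1`.  Consequently there is a tridiagonal `T̄_k ∈ ℝ^{(m_k+1)×m_k}`
with `A P_k = P_{k+1} T̄_k = P_k T_k + p_{k+1} t_k^{(m_k+1)} e_{m_k}ᵀ`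
(stated column by column). -/
theorem stmt_15 {d : ℕ} (A : Matrix (Fin d) (Fin d) ℝ) (b : E d)
    (hsymm : Aᵀ = A)
    (hpd : ∀ y : E d, y ≠ 0 → 0 < ⟪y, mvE A y⟫_ℝ)
    (m : ℕ) (hm : 1 ≤ m) (τ η : ℝ) (hτ0 : 0 < τ) (hτ1 : τ < 1) (hη : 0 < η)
    (S : STRun d) (hg : S.g = fun u => u - mvE A u + b)
    (hβpos : ∀ j, 0 < S.β j)
    (hrun : S.IsRestarted m τ η)
    (k : ℕ) (hmem : 2 ≤ S.mem (k + 1))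
    (hne : ∀ j ≤ k + 1, S.r j ≠ 0) :
    -- the three-term recurrence, with `φ_t = 0` when `m_t = 0`
    (mvE A (S.p k) =
        (if 2 ≤ S.mem k then
          ((if S.mem (k - 1) = 0 then 0 else S.Γ (k - 1) 1 + S.ζ k 1) /
            (S.β (k - 1) * (1 - S.Γ k 1))) • S.p (k - 1)
        else 0) +
        ((1 / (1 - S.Γ k 1)) *
          (1 / S.β (k - 1) -
            (if S.mem k = 0 then 0 else S.Γ k 1 + S.ζ (k + 1) 1) / S.β k)) • S.p k +
        (-(1 / (S.β k * (1 - S.Γ k 1)))) • S.p (k + 1)) ∧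
    -- `φ_k = Γ_k^{(m_k)} + ζ_{k+1}^{(m_k)} = Γ_{k+1}^{(m_k)} = v_kᵀ r_{k+1} / v_kᵀ q_k`
    (1 ≤ S.mem k →
      S.Γ k 1 + S.ζ (k + 1) 1 = S.Γ (k + 1) 0 ∧
      S.Γ (k + 1) 0 = ⟪S.v k, S.r (k + 1)⟫_ℝ / ⟪S.v k, S.q k⟫_ℝ) ∧
    -- the tridiagonal matrix `T̄_k` with `A P_k = P_{k+1} T̄_k = P_k T_k + …`
    (∃ Tb : ℕ → ℕ → ℝ,
      (∀ i j : ℕ, j + 1 < i ∨ i + 1 < j → Tb i j = 0) ∧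
      Tb (S.mem k) (S.mem k - 1) = -(1 / (S.β k * (1 - S.Γ k 1))) ∧
      (∀ j < S.mem k,
        mvE A (S.p (k - S.mem k + 1 + j)) =
          ∑ i ∈ Finset.range (S.mem k + 1), Tb i j • S.p (k - S.mem k + 1 + i)) ∧
      (∀ j < S.mem k,
        mvE A (S.p (k - S.mem k + 1 + j)) =
          (∑ i ∈ Finset.range (S.mem k), Tb i j • S.p (k - S.mem k + 1 + i)) +
            (if j + 1 = S.mem k then Tb (S.mem k) j else 0) • S.p (k + 1))) :=
  stmt_15_general A b hsymm hpd m τ η S hg hβpos hrun k hmem hne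

end
end
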